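/- arXiv:2507.19501 — 10 statements merged into one kernel-verified Lean document; each statement's English description precedes it below -/
import Mathlib

section
/- (Dual chain rule.) Let f, g : ℝ → ℝ be differentiable on ℝ, let deriv g be differentiable at x₁, let deriv f be differentiable at g x₁, and let x₂ ∈ ℝ. Then in DualNumber ℝ: deriv (f ∘ g) x₁ + ε x₂ · deriv (deriv (f ∘ g)) x₁ = (deriv f (g x₁) + ε x₂ · deriv g x₁ · deriv (deriv f) (g x₁)) · (deriv g x₁ + ε x₂ · deriv (deriv g) x₁). -/
open TrivSqZeroExt
open scoped DualNumber

theorem DualNumber.inl_add_smul_eps_mul_inl_add_smul_eps {R : Type*} [CommSemiring R]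
    (a b c d : R) :
    (inl a + b • ε : R[ε]) * (inl c + d • ε) = inl (a * c) + (a * d + b * c) • ε := by
  ext <;> simp

theorem deriv_deriv_comp {𝕜 : Type*} [NontriviallyNormedField 𝕜] {f g : 𝕜 → 𝕜} {x : 𝕜}
    (hf : Differentiable 𝕜 f) (hg : Differentiable 𝕜 g)
    (hf' : DifferentiableAt 𝕜 (deriv f) (g x)) (hg' : DifferentiableAt 𝕜 (deriv g) x) :
    deriv (deriv (f ∘ g)) x =
      deriv (deriv f) (g x) * deriv g x ^ 2 + deriv f (g x) * deriv (deriv g) x := by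
  have h_deriv : deriv (f ∘ g) = fun y => deriv f (g y) * deriv g y :=
    funext fun y => deriv_comp y (hf (g y)) (hg y)
  have h_outer : HasDerivAt (fun y => deriv f (g y)) (deriv (deriv f) (g x) * deriv g x) x :=
    hf'.hasDerivAt.comp x (hg x).hasDerivAt
  rw [h_deriv, (h_outer.fun_mul hg'.hasDerivAt).deriv]
  ring

/-- The dual chain rule. -/
theorem dual_deriv_comp (f g : ℝ → ℝ) (x₁ x₂ : ℝ)
    (hf : Differentiable ℝ f) (hg : Differentiable ℝ g)
    (hg' : DifferentiableAt ℝ (deriv g) x₁) (hf' : DifferentiableAt ℝ (deriv f) (g x₁)) :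
    ((inl (deriv (f ∘ g) x₁) + (x₂ * deriv (deriv (f ∘ g)) x₁) • ε) : DualNumber ℝ) =
      (inl (deriv f (g x₁)) + (x₂ * deriv g x₁ * deriv (deriv f) (g x₁)) • ε) *
        (inl (deriv g x₁) + (x₂ * deriv (deriv g) x₁) • ε) := by
  rw [DualNumber.inl_add_smul_eps_mul_inl_add_smul_eps, deriv_deriv_comp hf hg hf' hg',
    deriv_comp x₁ (hf (g x₁)) (hg x₁)]
  congr 2
  ring
end

section
/- For every real a > 0, the derivative of the real Gamma function at a is given by deriv Real.Gamma a = ∫_{t ∈ (0,∞)} e^{−t} t^{a−1} log t dt. Consequently, for â = a + ε b, the dual integral ∫₀^∞ e^{−t} t^{â−1} dt = ∫₀^∞ e^{−t} t^{a−1}(1 + ε b log t) dt equals Γ(a) + ε b Γ′(a). -/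
open TrivSqZeroExt MeasureTheory
open scoped DualNumber

lemma hasDerivAt_real_Gamma (a : ℝ) (ha : 0 < a) :
    HasDerivAt Real.Gamma (∫ t in Set.Ioi (0 : ℝ), Real.exp (-t) * t ^ (a - 1) * Real.log t) a := by
  have hre : 0 < (a : ℂ).re := by simpa using ha
  have h1 : HasDerivAt Complex.GammaIntegral
      (∫ t : ℝ in Set.Ioi 0, (t : ℂ) ^ ((a : ℂ) - 1) * (Real.log t * Real.exp (-t))) (a : ℂ) :=
    Complex.hasDerivAt_GammaIntegral hre
  have heq : Complex.Gamma =ᶠ[nhds (a : ℂ)] Complex.GammaIntegral := by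
    filter_upwards [(isOpen_Ioi.preimage Complex.continuous_re).mem_nhds
      (by simpa using ha : (a : ℂ) ∈ Complex.re ⁻¹' Set.Ioi 0)] with z hz
    exact Complex.Gamma_eq_integral hz
  have h2 : HasDerivAt Complex.Gamma
      (∫ t : ℝ in Set.Ioi 0, (t : ℂ) ^ ((a : ℂ) - 1) * (Real.log t * Real.exp (-t))) (a : ℂ) :=
    h1.congr_of_eventuallyEq heq
  have hint : (∫ t : ℝ in Set.Ioi 0, (t : ℂ) ^ ((a : ℂ) - 1) * (Real.log t * Real.exp (-t)))
      = ((∫ t in Set.Ioi (0 : ℝ), Real.exp (-t) * t ^ (a - 1) * Real.log t : ℝ) : ℂ) := by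
    rw [show (∫ t : ℝ in Set.Ioi 0, (t : ℂ) ^ ((a : ℂ) - 1) * (Real.log t * Real.exp (-t)))
        = ∫ t in Set.Ioi (0 : ℝ), ((Real.exp (-t) * t ^ (a - 1) * Real.log t : ℝ) : ℂ) from
      setIntegral_congr_fun measurableSet_Ioi fun t ht => by
        rw [(by push_cast; ring : ((a:ℂ) - 1) = ((a - 1 : ℝ) : ℂ)), ← Complex.ofReal_cpow (le_of_lt ht)]; push_cast; ring]
    exact integral_ofReal
  rw [hint] at h2
  have h3 := h2.real_of_complex
  exact h3

/-- The derivative of the Gamma function at `a > 0` is `∫₀^∞ e^{-t} t^{a-1} log t dt`, and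
consequently the dual integral `∫₀^∞ e^{-t} t^{â-1} dt = ∫₀^∞ e^{-t} t^{a-1} (1 + ε b log t) dt`
equals `Γ(a) + ε b Γ'(a)`. -/
theorem deriv_Gamma_eq_integral_and_dual_gamma_integral (a b : ℝ) (ha : 0 < a) :
    deriv Real.Gamma a = ∫ t in Set.Ioi (0 : ℝ), Real.exp (-t) * t ^ (a - 1) * Real.log t ∧
      ((inl (∫ t in Set.Ioi (0 : ℝ), Real.exp (-t) * t ^ (a - 1)) +
          (b * ∫ t in Set.Ioi (0 : ℝ), Real.exp (-t) * t ^ (a - 1) * Real.log t) • ε) :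
          DualNumber ℝ) =
        inl (Real.Gamma a) + (b * deriv Real.Gamma a) • ε := by
  have hd := hasDerivAt_real_Gamma a ha
  have h1 : deriv Real.Gamma a = ∫ t in Set.Ioi (0 : ℝ), Real.exp (-t) * t ^ (a - 1) * Real.log t :=
    hd.deriv
  refine ⟨h1, ?_⟩
  rw [h1, ← Real.Gamma_eq_integral ha]
end

section
/- (Functional equation of the dual gamma function.) Let a, b ∈ ℝ with a ≠ −n for every n ∈ ℕ (i.e., a is not 0, −1, −2, …), and let â = a + ε b. Then Γ_d(â + 1) = â · Γ_d(â); explicitly, in DualNumber ℝ, inl(Γ(a+1)) + (b · Γ′(a+1)) · ε = (inl a + b · ε) · (inl(Γ(a)) + (b · Γ′(a)) · ε). -/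
open TrivSqZeroExt
open scoped DualNumber

/-- The dual gamma function `Γ_d(a + ε b) = Γ(a) + ε b Γ'(a)`. -/
noncomputable def dualGamma (a b : ℝ) : DualNumber ℝ :=
  inl (Real.Gamma a) + (b * deriv Real.Gamma a) • ε

lemma deriv_Gamma_add_one (a : ℝ) (ha : ∀ n : ℕ, a ≠ -n) :
    deriv Real.Gamma (a + 1) = Real.Gamma a + a * deriv Real.Gamma a := by
  have ha0 : a ≠ 0 := by simpa using ha 0
  have ha1 : ∀ n : ℕ, a + 1 ≠ -n := by
    intro n h
    have := ha (n + 1)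
    push_cast at this
    exact this (by linarith)
  have hΓ : HasDerivAt Real.Gamma (deriv Real.Gamma a) a :=
    (Real.differentiableAt_Gamma ha).hasDerivAt
  have h1 : HasDerivAt (fun x : ℝ => Real.Gamma (x + 1))
      (deriv Real.Gamma (a + 1)) a := by
    have := ((Real.differentiableAt_Gamma ha1).hasDerivAt).comp a
      ((hasDerivAt_id a).add_const 1)
    simpa [Function.comp_def] using this
  have h2 : HasDerivAt (fun x : ℝ => x * Real.Gamma x)
      (Real.Gamma a + a * deriv Real.Gamma a) a := by
    have := (hasDerivAt_id' a).mul hΓ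
    rw [one_mul] at this
    exact this
  have heq : (fun x : ℝ => Real.Gamma (x + 1)) =ᶠ[nhds a]
      (fun x : ℝ => x * Real.Gamma x) := by
    filter_upwards [isOpen_ne.mem_nhds ha0] with x hx
    exact Real.Gamma_add_one hx
  have h1' : HasDerivAt (fun x : ℝ => x * Real.Gamma x)
      (deriv Real.Gamma (a + 1)) a := h1.congr_of_eventuallyEq heq.symm
  exact h1'.unique h2

/-- The functional equation of the dual gamma function: `Γ_d(â + 1) = â Γ_d(â)`. -/
theorem dualGamma_add_one (a b : ℝ) (ha : ∀ n : ℕ, a ≠ -n) :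
    dualGamma (a + 1) b = ((inl a + b • ε) : DualNumber ℝ) * dualGamma a b := by
  have ha0 : a ≠ 0 := by simpa using ha 0
  unfold dualGamma
  ext
  · simp [Real.Gamma_add_one ha0]
  · simp [deriv_Gamma_add_one a ha]
    ring
end

section
/- Let a, b ∈ ℝ with a ≠ −n for every n ∈ ℕ, let â = a + ε b, and let k ∈ ℕ. Then Γ_d(â + k) = (â + k − 1)(â + k − 2)⋯(â + 1)·â · Γ_d(â) in DualNumber ℝ; that is, Γ_d(â + k) = (â)_k · Γ_d(â). -/
open TrivSqZeroExt
open scoped DualNumber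

/-- The dual shifted factorial `(â)_k = â(â+1)⋯(â+k-1)`. -/
def dualPoch (x : DualNumber ℝ) : ℕ → DualNumber ℝ
  | 0 => 1
  | k + 1 => dualPoch x k * (x + (k : DualNumber ℝ))

/-- `Γ_d(â + k) = (â + k - 1)(â + k - 2)⋯(â + 1) â Γ_d(â) = (â)_k Γ_d(â)`. -/
theorem dualGamma_add_nat (a b : ℝ) (ha : ∀ n : ℕ, a ≠ -n) (k : ℕ) :
    dualGamma (a + k) b = dualPoch (inl a + b • ε) k * dualGamma a b := by
  induction k with
  | zero => simp [dualPoch, dualGamma]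
  | succ k ih =>
    have ha' : ∀ n : ℕ, a + k ≠ -n := by
      intro n h
      have : a = -(n + k : ℕ) := by push_cast; linarith
      exact ha _ this
    have hne : a + (k : ℝ) ≠ 0 := by
      have := ha' 0; simpa using this
    have hdvt : HasDerivAt Real.Gamma (deriv Real.Gamma (a + k)) (a + k) :=
      (Real.differentiableAt_Gamma ha').hasDerivAt
    have hev : Real.Gamma =ᶠ[nhds (a + k + 1)] fun y => (y - 1) * Real.Gamma (y - 1) := by
      have : ∀ᶠ y in nhds (a + k + 1), y - 1 ≠ 0 := by
        have : ContinuousAt (fun y : ℝ => y - 1) (a + k + 1) := by fun_prop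
        have h2 := this.eventually_ne (by simpa using hne)
        simpa using h2
      filter_upwards [this] with y hy
      rw [← Real.Gamma_add_one hy, sub_add_cancel]
    have hder : HasDerivAt (fun y => (y - 1) * Real.Gamma (y - 1))
        (1 * Real.Gamma (a + k) + (a + k) * (deriv Real.Gamma (a + k) * 1)) (a + k + 1) := by
      have hin : HasDerivAt (fun y : ℝ => y - 1) 1 (a + k + 1) :=
        (hasDerivAt_id _).sub_const 1
      have hcomp : HasDerivAt (fun y => Real.Gamma (y - 1)) (deriv Real.Gamma (a + k) * 1)
          (a + k + 1) := by
        have hdvt' : HasDerivAt Real.Gamma (deriv Real.Gamma (a + k)) (a + k + 1 - 1) := by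
          simpa using hdvt
        have := hdvt'.comp (a + k + 1) hin
        exact this
      have := hin.mul hcomp
      exact this.congr_deriv (by rw [add_sub_cancel_right])
    have hderiv : deriv Real.Gamma (a + k + 1) =
        Real.Gamma (a + k) + (a + k) * deriv Real.Gamma (a + k) := by
      rw [hev.deriv_eq, hder.deriv]
      ring
    have hGa : Real.Gamma (a + k + 1) = (a + k) * Real.Gamma (a + k) :=
      Real.Gamma_add_one hne
    have key : dualGamma (a + k + 1) b =
        (inl a + b • ε + (k : DualNumber ℝ)) * dualGamma (a + k) b := by
      ext
      · simp [dualGamma, hGa]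
      · simp [dualGamma, hderiv]
        ring
    rw [show ((k : ℕ) + 1 : ℕ) = k + 1 from rfl, dualPoch]
    push_cast
    rw [← add_assoc, key, ih]
    ring
end

section
/- (Fundamental relation between dual beta and dual gamma functions.) Let â = a + ε b and ĉ = c + ε d be real dual numbers with a > 0 and c > 0. Then β_d(â, ĉ) · Γ_d(â + ĉ) = Γ_d(â) · Γ_d(ĉ) in DualNumber ℝ. -/
open TrivSqZeroExt MeasureTheory
open scoped DualNumber

/-- The dual beta function `β_d(a + ε b, c + ε d)`. -/
noncomputable def dualBeta (a b c d : ℝ) : DualNumber ℝ :=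
  inl (∫ t in (0 : ℝ)..1, t ^ (a - 1) * (1 - t) ^ (c - 1)) +
    ((b * ∫ t in (0 : ℝ)..1, t ^ (a - 1) * (1 - t) ^ (c - 1) * Real.log t) +
      (d * ∫ t in (0 : ℝ)..1, t ^ (a - 1) * (1 - t) ^ (c - 1) * Real.log (1 - t))) • ε

open Real Set in
/-- The real Beta integral in terms of the Gamma function. -/
lemma DualGammaAux.realBeta_eq (a c : ℝ) (ha : 0 < a) (hc : 0 < c) :
    ∫ t in (0:ℝ)..1, t ^ (a - 1) * (1 - t) ^ (c - 1)
      = Real.Gamma a * Real.Gamma c / Real.Gamma (a + c) := by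
  have h := Complex.Gamma_mul_Gamma_eq_betaIntegral (s := a) (t := c)
    (by simpa using ha) (by simpa using hc)
  have hB : Complex.betaIntegral a c
      = ((∫ t in (0:ℝ)..1, t ^ (a - 1) * (1 - t) ^ (c - 1) : ℝ) : ℂ) := by
    rw [Complex.betaIntegral, ← intervalIntegral.integral_ofReal]
    refine intervalIntegral.integral_congr fun t ht => ?_
    rw [uIcc_of_le (by norm_num)] at ht
    rw [show ((a:ℂ)-1) = ((a-1:ℝ):ℂ) by push_cast; ring,
      show ((c:ℂ)-1) = ((c-1:ℝ):ℂ) by push_cast; ring,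
      show ((1:ℂ) - (t:ℂ)) = ((1-t:ℝ):ℂ) by push_cast; ring,
      ← Complex.ofReal_cpow ht.1, ← Complex.ofReal_cpow (by linarith [ht.2])]
    push_cast
    ring
  rw [hB, ← Complex.ofReal_add, Complex.Gamma_ofReal, Complex.Gamma_ofReal,
    Complex.Gamma_ofReal, ← Complex.ofReal_mul, ← Complex.ofReal_mul,
    Complex.ofReal_inj] at h
  rw [eq_div_iff (Real.Gamma_pos_of_pos (by linarith : (0:ℝ) < a + c)).ne']
  linarith [h]

open Real Set in
/-- Integrability of the Beta integrand. -/
lemma DualGammaAux.betaInt {p q : ℝ} (hp : 0 < p) (hq : 0 < q) :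
    IntegrableOn (fun t : ℝ => t ^ (p - 1) * (1 - t) ^ (q - 1)) (Ioc (0:ℝ) 1) := by
  have h := (Complex.betaIntegral_convergent (u := p) (v := q)
    (by simpa using hp) (by simpa using hq)).norm
  rw [intervalIntegrable_iff_integrableOn_Ioc_of_le (by norm_num)] at h
  refine h.congr_fun_ae ?_
  have h1 : ∀ᵐ t : ℝ, t ≠ (1:ℝ) := by
    rw [ae_iff]; simp [not_ne_iff]
  filter_upwards [ae_restrict_mem measurableSet_Ioc, ae_restrict_of_ae h1] with t ht ht1
  have h1' : t < 1 := lt_of_le_of_ne ht.2 ht1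
  rw [norm_mul,
    Complex.norm_cpow_eq_rpow_re_of_pos ht.1,
    show ((1:ℂ) - t) = ((1-t:ℝ):ℂ) by push_cast; ring,
    Complex.norm_cpow_eq_rpow_re_of_pos (by linarith)]
  norm_num

open Real in
/-- `|log t| ≤ t ^ (-s) / s` on `(0, 1]`. -/
lemma DualGammaAux.log_bound {t s : ℝ} (ht : 0 < t) (ht1 : t ≤ 1) (hs : 0 < s) :
    |Real.log t| ≤ t ^ (-s) / s := by
  have h1 : s * (-Real.log t) ≤ t ^ (-s) := by
    rw [show s * -Real.log t = (-s) * Real.log t by ring, ← Real.log_rpow ht]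
    calc Real.log (t ^ (-s)) ≤ t ^ (-s) - 1 :=
      Real.log_le_sub_one_of_pos (Real.rpow_pos_of_pos ht _)
    _ ≤ t ^ (-s) := by linarith
  rw [abs_of_nonpos (Real.log_nonpos ht.le ht1), le_div_iff₀ hs]
  linarith

open Real Set in
/-- Differentiation under the integral sign for the Beta integral. -/
lemma DualGammaAux.hasDerivAt_betaIntegral {a c : ℝ} (ha : 0 < a) (hc : 0 < c) :
    HasDerivAt (fun x => ∫ t in (0:ℝ)..1, t ^ (x - 1) * (1 - t) ^ (c - 1))
      (∫ t in (0:ℝ)..1, t ^ (a - 1) * (1 - t) ^ (c - 1) * Real.log t) a := by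
  simp_rw [intervalIntegral.integral_of_le (zero_le_one' ℝ)]
  have key := hasDerivAt_integral_of_dominated_loc_of_deriv_le
    (F := fun x t => t ^ (x - 1) * (1 - t) ^ (c - 1))
    (F' := fun x t => t ^ (x - 1) * (1 - t) ^ (c - 1) * Real.log t)
    (μ := volume.restrict (Ioc (0:ℝ) 1)) (x₀ := a)
    (bound := fun t => (4 / a) * (t ^ (a / 4 - 1) * (1 - t) ^ (c - 1)))
    (Metric.ball_mem_nhds a (by positivity : (0:ℝ) < a / 2))
    ?_ ((DualGammaAux.betaInt ha hc)) ?_ ?_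
    ((DualGammaAux.betaInt (by positivity) hc).const_mul _) ?_
  · exact key.2
  · exact Filter.Eventually.of_forall fun x => (by fun_prop : Measurable fun t : ℝ =>
      t ^ (x - 1) * (1 - t) ^ (c - 1)).aestronglyMeasurable
  · exact (((by fun_prop : Measurable fun t : ℝ =>
      t ^ (a - 1) * (1 - t) ^ (c - 1))).mul Real.measurable_log).aestronglyMeasurable
  · filter_upwards [ae_restrict_mem measurableSet_Ioc] with t ht x hx
    rw [Metric.mem_ball, Real.dist_eq, abs_lt] at hx
    have h1 : t ^ (x - 1) ≤ t ^ (a / 2 - 1) :=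
      Real.rpow_le_rpow_of_exponent_ge ht.1 ht.2 (by linarith)
    have h2 : |Real.log t| ≤ t ^ (-(a/4)) / (a/4) :=
      DualGammaAux.log_bound ht.1 ht.2 (by positivity)
    have h3 : (0:ℝ) ≤ (1 - t) ^ (c - 1) := Real.rpow_nonneg (by linarith [ht.2]) _
    calc ‖t ^ (x - 1) * (1 - t) ^ (c - 1) * Real.log t‖
        = t ^ (x - 1) * (1 - t) ^ (c - 1) * |Real.log t| := by
          rw [norm_mul, norm_mul]
          simp [abs_of_nonneg (Real.rpow_nonneg ht.1.le _), abs_of_nonneg h3]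
      _ ≤ t ^ (a/2 - 1) * (1 - t) ^ (c - 1) * (t ^ (-(a/4)) / (a/4)) := by
          exact mul_le_mul (mul_le_mul_of_nonneg_right h1 h3) h2 (abs_nonneg _)
            (mul_nonneg (Real.rpow_nonneg ht.1.le _) h3)
      _ = 4 / a * (t ^ (a / 4 - 1) * (1 - t) ^ (c - 1)) := by
          rw [show a/4 - 1 = (a/2 - 1) + -(a/4) by ring, Real.rpow_add ht.1]
          field_simp
  · filter_upwards [ae_restrict_mem measurableSet_Ioc] with t ht x hx
    have hd := (HasDerivAt.rpow (hasDerivAt_const x t)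
      ((hasDerivAt_id x).sub_const 1) ht.1).mul_const ((1 - t) ^ (c - 1))
    refine hd.congr_deriv ?_
    simp only [id_eq, zero_mul, one_mul, zero_add]
    ring

/-- `x > 0` is not a nonpositive integer. -/
lemma DualGammaAux.gamma_ne (x : ℝ) (hx : 0 < x) : ∀ m : ℕ, x ≠ -m :=
  fun m => ne_of_gt (lt_of_le_of_lt (neg_nonpos.2 m.cast_nonneg) hx)

open Real Set in
/-- The log-weighted Beta integral in terms of the Gamma function and its derivative. -/
lemma DualGammaAux.logInt_eq {a c : ℝ} (ha : 0 < a) (hc : 0 < c) :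
    ∫ t in (0:ℝ)..1, t ^ (a - 1) * (1 - t) ^ (c - 1) * Real.log t
      = (deriv Real.Gamma a * Real.Gamma c * Real.Gamma (a + c)
          - Real.Gamma a * Real.Gamma c * deriv Real.Gamma (a + c))
        / Real.Gamma (a + c) ^ 2 := by
  have hf := DualGammaAux.hasDerivAt_betaIntegral ha hc
  have hne : Real.Gamma (a + c) ≠ 0 := (Real.Gamma_pos_of_pos (by linarith)).ne'
  have hΓa : HasDerivAt Real.Gamma (deriv Real.Gamma a) a :=
    (Real.differentiableAt_Gamma (DualGammaAux.gamma_ne a ha)).hasDerivAt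
  have hΓac : HasDerivAt (fun x => Real.Gamma (x + c)) (deriv Real.Gamma (a + c)) a := by
    have := ((Real.differentiableAt_Gamma
      (DualGammaAux.gamma_ne (a + c) (by linarith))).hasDerivAt).comp a
      ((hasDerivAt_id a).add_const c)
    rw [mul_one] at this
    exact this
  have hG := (hΓa.mul_const (Real.Gamma c)).div hΓac hne
  have heq : (fun x => ∫ t in (0:ℝ)..1, t ^ (x - 1) * (1 - t) ^ (c - 1))
      =ᶠ[nhds a] fun x => Real.Gamma x * Real.Gamma c / Real.Gamma (x + c) := by
    filter_upwards [Ioi_mem_nhds ha] with x hx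
    exact DualGammaAux.realBeta_eq x c hx hc
  exact hf.unique (hG.congr_of_eventuallyEq heq)

open Real Set in
/-- Symmetry of the two log-weighted Beta integrals. -/
lemma DualGammaAux.logInt2_eq (a c : ℝ) :
    ∫ t in (0:ℝ)..1, t ^ (a - 1) * (1 - t) ^ (c - 1) * Real.log (1 - t)
      = ∫ t in (0:ℝ)..1, t ^ (c - 1) * (1 - t) ^ (a - 1) * Real.log t := by
  have h := intervalIntegral.integral_comp_sub_left (a := (0:ℝ)) (b := 1)
    (fun t => t ^ (c - 1) * (1 - t) ^ (a - 1) * Real.log t) 1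
  simp only [sub_zero, sub_self, sub_sub_cancel] at h
  rw [← h]
  exact intervalIntegral.integral_congr fun t _ => by ring

/-- The fundamental relation between the dual beta and dual gamma functions:
`β_d(â, ĉ) Γ_d(â + ĉ) = Γ_d(â) Γ_d(ĉ)`. -/
theorem dualBeta_mul_dualGamma_add (a b c d : ℝ) (ha : 0 < a) (hc : 0 < c) :
    dualBeta a b c d * dualGamma (a + c) (b + d) = dualGamma a b * dualGamma c d := by
  have hne : Real.Gamma (a + c) ≠ 0 := (Real.Gamma_pos_of_pos (by linarith)).ne'
  have hL2 : ∫ t in (0:ℝ)..1, t ^ (c - 1) * (1 - t) ^ (a - 1) * Real.log t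
      = (deriv Real.Gamma c * Real.Gamma a * Real.Gamma (a + c)
          - Real.Gamma c * Real.Gamma a * deriv Real.Gamma (a + c))
        / Real.Gamma (a + c) ^ 2 := by
    rw [DualGammaAux.logInt_eq hc ha, add_comm c a]
  ext
  · simp [dualBeta, dualGamma]
    rw [DualGammaAux.realBeta_eq a c ha hc]
    field_simp
  · simp [dualBeta, dualGamma]
    rw [DualGammaAux.realBeta_eq a c ha hc, DualGammaAux.logInt2_eq, hL2,
      DualGammaAux.logInt_eq ha hc]
    field_simp
    ring
end

section
/- (Functional relations of the dual beta function, part 1.) Let â = a + ε b and ĉ = c + ε d be real dual numbers with a > 0 and c > 0. Then â · β_d(â, ĉ + 1) = ĉ · β_d(â + 1, ĉ) and (â + ĉ) · β_d(â, ĉ + 1) = ĉ · β_d(â, ĉ) in DualNumber ℝ. -/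
open TrivSqZeroExt MeasureTheory Set Filter Topology Real intervalIntegral
open scoped DualNumber

section aux
lemma contAux {p q : ℝ} {h : ℝ → ℝ} (hh : ContinuousOn h (Ioo (0:ℝ) 1)) :
    AEStronglyMeasurable (fun t : ℝ => t ^ p * (1 - t) ^ q * h t)
      (volume.restrict (Set.uIoc (0:ℝ) 1)) := by
  rw [uIoc_of_le (zero_le_one : (0:ℝ) ≤ 1),
    ← MeasureTheory.Measure.restrict_congr_set MeasureTheory.Ioo_ae_eq_Ioc]
  refine ContinuousOn.aestronglyMeasurable ?_ measurableSet_Ioo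
  refine ContinuousOn.mul (ContinuousOn.mul ?_ ?_) hh
  · exact continuousOn_id.rpow_const fun x hx => Or.inl hx.1.ne'
  · exact (continuous_const.sub continuous_id).continuousOn.rpow_const
      fun x hx => Or.inl (sub_ne_zero.2 hx.2.ne')

lemma contLog1 : ContinuousOn (fun t : ℝ => Real.log t) (Ioo (0:ℝ) 1) :=
  Real.continuousOn_log.mono fun x hx => hx.1.ne'

lemma contLog2 : ContinuousOn (fun t : ℝ => Real.log (1 - t)) (Ioo (0:ℝ) 1) := fun t ht =>
  ((Real.continuousAt_log (sub_ne_zero.2 ht.2.ne')).comp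
    ((continuous_const.sub continuous_id).continuousAt)).continuousWithinAt

lemma Ibeta {p q : ℝ} (hp : -1 < p) (hq : -1 < q) :
    IntervalIntegrable (fun t : ℝ => t ^ p * (1 - t) ^ q) volume 0 1 := by
  have h := Complex.betaIntegral_convergent (u := (p : ℂ) + 1) (v := (q : ℂ) + 1)
    (by simpa using by linarith : 0 < ((p:ℂ)+1).re) (by simpa using by linarith : 0 < ((q:ℂ)+1).re)
  simp only [add_sub_cancel_right] at h
  refine h.mono_fun ?_ ?_
  · simpa using contAux (p := p) (q := q) (h := fun _ => (1:ℝ)) continuousOn_const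
  · rw [uIoc_of_le (zero_le_one : (0:ℝ) ≤ 1)]
    refine (ae_restrict_iff' measurableSet_Ioc).2 (Eventually.of_forall fun t ht => ?_)
    dsimp only
    rcases eq_or_lt_of_le ht.2 with h1 | h1
    · subst h1
      rcases eq_or_ne q 0 with hq0 | hq0
      · simp [hq0]
      · simp [Real.zero_rpow hq0, norm_nonneg]
    · have ht0 : (0:ℝ) < t := ht.1
      have ht1 : (0:ℝ) < 1 - t := by linarith
      rw [norm_mul ((t:ℂ) ^ (p:ℂ)),
        Complex.norm_cpow_eq_rpow_re_of_pos (by exact_mod_cast ht0),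
        show ((1:ℂ) - t) = ((1 - t : ℝ) : ℂ) by push_cast; ring,
        Complex.norm_cpow_eq_rpow_re_of_pos (by exact_mod_cast ht1)]
      simp [Real.norm_eq_abs, abs_mul, abs_of_nonneg (Real.rpow_nonneg ht0.le _),
        abs_of_nonneg (Real.rpow_nonneg ht1.le _)]

lemma IbetaLog1 {p q : ℝ} (hp : -1 < p) (hq : -1 < q) :
    IntervalIntegrable (fun t : ℝ => t ^ p * (1 - t) ^ q * Real.log t) volume 0 1 := by
  have hs : (0:ℝ) < (p+1)/2 := by linarith
  refine ((Ibeta (by linarith : (-1:ℝ) < (p-1)/2) hq).const_mul (1/((p+1)/2))).mono_fun'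
    (contAux contLog1) ?_
  rw [uIoc_of_le (zero_le_one : (0:ℝ) ≤ 1)]
  refine (ae_restrict_iff' measurableSet_Ioc).2 (Eventually.of_forall fun t ht => ?_)
  dsimp only
  rcases eq_or_lt_of_le ht.2 with h1 | h1
  · subst h1
    simp only [Real.log_one, mul_zero, norm_zero]
    positivity
  · have ht0 : (0:ℝ) < t := ht.1
    have ht1 : (0:ℝ) < 1 - t := by linarith
    have hlog : |Real.log t| ≤ (t ^ ((p+1)/2))⁻¹ / ((p+1)/2) := by
      rw [abs_of_nonpos (Real.log_nonpos ht0.le ht.2)]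
      have h2 := Real.log_le_rpow_div (x := t⁻¹) (inv_nonneg.2 ht0.le) hs
      rwa [Real.log_inv, Real.inv_rpow ht0.le] at h2
    calc ‖t ^ p * (1 - t) ^ q * Real.log t‖
        = t ^ p * (1 - t) ^ q * |Real.log t| := by
          rw [Real.norm_eq_abs, abs_mul, abs_mul,
            abs_of_nonneg (Real.rpow_nonneg ht0.le _), abs_of_nonneg (Real.rpow_nonneg ht1.le _)]
      _ ≤ t ^ p * (1 - t) ^ q * ((t ^ ((p+1)/2))⁻¹ / ((p+1)/2)) := by
          have h3 : (0:ℝ) ≤ t ^ p * (1 - t) ^ q := by positivity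
          exact mul_le_mul_of_nonneg_left hlog h3
      _ = 1/((p+1)/2) * (t ^ ((p-1)/2) * (1 - t) ^ q) := by
          rw [show (p-1)/2 = p - (p+1)/2 by ring, Real.rpow_sub ht0]
          field_simp

lemma IbetaLog2 {p q : ℝ} (hp : -1 < p) (hq : -1 < q) :
    IntervalIntegrable (fun t : ℝ => t ^ p * (1 - t) ^ q * Real.log (1 - t)) volume 0 1 := by
  have hs : (0:ℝ) < (q+1)/2 := by linarith
  refine ((Ibeta hp (by linarith : (-1:ℝ) < (q-1)/2)).const_mul (1/((q+1)/2))).mono_fun'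
    (contAux contLog2) ?_
  rw [uIoc_of_le (zero_le_one : (0:ℝ) ≤ 1)]
  refine (ae_restrict_iff' measurableSet_Ioc).2 (Eventually.of_forall fun t ht => ?_)
  dsimp only
  rcases eq_or_lt_of_le ht.2 with h1 | h1
  · subst h1
    simp only [sub_self, Real.log_zero, mul_zero, norm_zero]
    positivity
  · have ht0 : (0:ℝ) < t := ht.1
    have ht1 : (0:ℝ) < 1 - t := by linarith
    have hlog : |Real.log (1 - t)| ≤ ((1 - t) ^ ((q+1)/2))⁻¹ / ((q+1)/2) := by
      rw [abs_of_nonpos (Real.log_nonpos ht1.le (by linarith))]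
      have h2 := Real.log_le_rpow_div (x := (1 - t)⁻¹) (inv_nonneg.2 ht1.le) hs
      rwa [Real.log_inv, Real.inv_rpow ht1.le] at h2
    calc ‖t ^ p * (1 - t) ^ q * Real.log (1 - t)‖
        = t ^ p * (1 - t) ^ q * |Real.log (1 - t)| := by
          rw [Real.norm_eq_abs, abs_mul, abs_mul,
            abs_of_nonneg (Real.rpow_nonneg ht0.le _), abs_of_nonneg (Real.rpow_nonneg ht1.le _)]
      _ ≤ t ^ p * (1 - t) ^ q * (((1 - t) ^ ((q+1)/2))⁻¹ / ((q+1)/2)) := by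
          have h3 : (0:ℝ) ≤ t ^ p * (1 - t) ^ q := by positivity
          exact mul_le_mul_of_nonneg_left hlog h3
      _ = 1/((q+1)/2) * (t ^ p * (1 - t) ^ ((q-1)/2)) := by
          rw [show (q-1)/2 = q - (q+1)/2 by ring, Real.rpow_sub ht1]
          field_simp


section aux

variable {a c : ℝ}

lemma derivMain {t : ℝ} (ht : t ∈ Ioo (0:ℝ) 1) :
    HasDerivAt (fun t : ℝ => t ^ a * (1 - t) ^ c)
      (a * (t ^ (a-1) * (1-t) ^ c) - c * (t ^ a * (1-t) ^ (c-1))) t := by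
  have ht1 : (1:ℝ) - t ≠ 0 := sub_ne_zero.2 ht.2.ne'
  have h1 : HasDerivAt (fun t : ℝ => t ^ a) (a * t ^ (a-1)) t :=
    Real.hasDerivAt_rpow_const (Or.inl ht.1.ne')
  have h3 : HasDerivAt (fun t : ℝ => (1:ℝ) - t) (-1) t := (hasDerivAt_id t).const_sub 1
  have h2 : HasDerivAt (fun t : ℝ => (1 - t) ^ c) (-(c * (1 - t) ^ (c-1))) t := by
    have := (Real.hasDerivAt_rpow_const (x := 1 - t) (p := c) (Or.inl ht1)).comp t h3
    simpa [Function.comp_def] using this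
  have := h1.mul h2
  refine this.congr_deriv ?_
  ring

lemma derivLog1 {t : ℝ} (ht : t ∈ Ioo (0:ℝ) 1) :
    HasDerivAt (fun t : ℝ => t ^ a * (1 - t) ^ c * Real.log t)
      (a * (t ^ (a-1) * (1-t) ^ c * Real.log t) + t ^ (a-1) * (1-t) ^ c
        - c * (t ^ a * (1-t) ^ (c-1) * Real.log t)) t := by
  have := (derivMain (a := a) (c := c) ht).mul (Real.hasDerivAt_log ht.1.ne')
  refine this.congr_deriv ?_
  have key : t ^ a * t⁻¹ = t ^ (a-1) := by
    rw [Real.rpow_sub ht.1, Real.rpow_one, div_eq_mul_inv]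
  rw [← key]; ring

lemma derivLog2 {t : ℝ} (ht : t ∈ Ioo (0:ℝ) 1) :
    HasDerivAt (fun t : ℝ => t ^ a * (1 - t) ^ c * Real.log (1 - t))
      (a * (t ^ (a-1) * (1-t) ^ c * Real.log (1-t))
        - c * (t ^ a * (1-t) ^ (c-1) * Real.log (1-t)) - t ^ a * (1-t) ^ (c-1)) t := by
  have ht1 : (0:ℝ) < 1 - t := by have := ht.2; simp [sub_pos, this]
  have hlog : HasDerivAt (fun t : ℝ => Real.log (1 - t)) (-(1-t)⁻¹) t := by
    have := (Real.hasDerivAt_log ht1.ne').comp t ((hasDerivAt_id t).const_sub 1)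
    simpa [Function.comp_def] using this
  have := (derivMain (a := a) (c := c) ht).mul hlog
  refine this.congr_deriv ?_
  have key : (1-t) ^ c * (1-t)⁻¹ = (1-t) ^ (c-1) := by
    rw [Real.rpow_sub ht1, Real.rpow_one, div_eq_mul_inv]
  rw [← key]; ring

lemma ftc1 (ha : 0 < a) (hc : 0 < c) :
    a * ∫ t in (0:ℝ)..1, t ^ (a-1) * (1-t) ^ c
      = c * ∫ t in (0:ℝ)..1, t ^ a * (1-t) ^ (c-1) := by
  have i1 : IntervalIntegrable (fun t : ℝ => t ^ (a-1) * (1-t) ^ c) volume 0 1 :=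
    Ibeta (by linarith) (by linarith)
  have i2 : IntervalIntegrable (fun t : ℝ => t ^ a * (1-t) ^ (c-1)) volume 0 1 :=
    Ibeta (by linarith) (by linarith)
  have hint := (i1.const_mul a).sub (i2.const_mul c)
  have h0 : Tendsto (fun t : ℝ => t ^ a * (1-t) ^ c) (𝓝[>] (0:ℝ)) (𝓝 0) := by
    have hco : ContinuousAt (fun t : ℝ => t ^ a * (1-t) ^ c) 0 :=
      (Real.continuousAt_rpow_const 0 a (Or.inr ha.le)).mul
        (((continuous_const.sub continuous_id).continuousAt).rpow_const (Or.inl (by norm_num)))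
    have := hco.tendsto.mono_left (nhdsWithin_le_nhds (s := Set.Ioi (0:ℝ)))
    simpa [Real.zero_rpow ha.ne'] using this
  have h1 : Tendsto (fun t : ℝ => t ^ a * (1-t) ^ c) (𝓝[<] (1:ℝ)) (𝓝 0) := by
    have hco : ContinuousAt (fun t : ℝ => t ^ a * (1-t) ^ c) 1 :=
      (Real.continuousAt_rpow_const 1 a (Or.inl one_ne_zero)).mul
        (((continuous_const.sub continuous_id).continuousAt).rpow_const (Or.inr hc.le))
    have := hco.tendsto.mono_left (nhdsWithin_le_nhds (s := Set.Iio (1:ℝ)))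
    simpa [Real.zero_rpow hc.ne'] using this
  have key := intervalIntegral.integral_eq_sub_of_hasDerivAt_of_tendsto zero_lt_one
    (fun t ht => derivMain (a := a) (c := c) ht) hint h0 h1
  rw [intervalIntegral.integral_sub (i1.const_mul a) (i2.const_mul c),
    intervalIntegral.integral_const_mul, intervalIntegral.integral_const_mul] at key
  linarith

lemma ftc2 (ha : 0 < a) (hc : 0 < c) :
    a * (∫ t in (0:ℝ)..1, t ^ (a-1) * (1-t) ^ c * Real.log t)
        + ∫ t in (0:ℝ)..1, t ^ (a-1) * (1-t) ^ c
      = c * ∫ t in (0:ℝ)..1, t ^ a * (1-t) ^ (c-1) * Real.log t := by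
  have i1 : IntervalIntegrable (fun t : ℝ => t ^ (a-1) * (1-t) ^ c * Real.log t) volume 0 1 :=
    IbetaLog1 (by linarith) (by linarith)
  have i0 : IntervalIntegrable (fun t : ℝ => t ^ (a-1) * (1-t) ^ c) volume 0 1 :=
    Ibeta (by linarith) (by linarith)
  have i2 : IntervalIntegrable (fun t : ℝ => t ^ a * (1-t) ^ (c-1) * Real.log t) volume 0 1 :=
    IbetaLog1 (by linarith) (by linarith)
  have hint := ((i1.const_mul a).add i0).sub (i2.const_mul c)
  have h0 : Tendsto (fun t : ℝ => t ^ a * (1-t) ^ c * Real.log t) (𝓝[>] (0:ℝ)) (𝓝 0) := by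
    have hc1 : Tendsto (fun t : ℝ => (1-t) ^ c) (𝓝[>] (0:ℝ)) (𝓝 1) := by
      have hco : ContinuousAt (fun t : ℝ => (1-t) ^ c) 0 :=
        ((continuous_const.sub continuous_id).continuousAt).rpow_const (Or.inl (by norm_num))
      simpa using hco.tendsto.mono_left nhdsWithin_le_nhds
    have := (tendsto_log_mul_rpow_nhdsGT_zero ha).mul hc1
    simp only [zero_mul] at this
    exact this.congr fun t => by ring
  have h1 : Tendsto (fun t : ℝ => t ^ a * (1-t) ^ c * Real.log t) (𝓝[<] (1:ℝ)) (𝓝 0) := by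
    have hco : ContinuousAt (fun t : ℝ => t ^ a * (1-t) ^ c * Real.log t) 1 :=
      ((Real.continuousAt_rpow_const 1 a (Or.inl one_ne_zero)).mul
        (((continuous_const.sub continuous_id).continuousAt).rpow_const (Or.inr hc.le))).mul
        (Real.continuousAt_log one_ne_zero)
    have := hco.tendsto.mono_left (nhdsWithin_le_nhds (s := Set.Iio (1:ℝ)))
    simpa using this
  have key := intervalIntegral.integral_eq_sub_of_hasDerivAt_of_tendsto zero_lt_one
    (fun t ht => derivLog1 (a := a) (c := c) ht) hint h0 h1
  rw [intervalIntegral.integral_sub ((i1.const_mul a).add i0) (i2.const_mul c),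
    intervalIntegral.integral_add (i1.const_mul a) i0,
    intervalIntegral.integral_const_mul, intervalIntegral.integral_const_mul] at key
  linarith

lemma ftc3 (ha : 0 < a) (hc : 0 < c) :
    a * (∫ t in (0:ℝ)..1, t ^ (a-1) * (1-t) ^ c * Real.log (1-t))
      = c * (∫ t in (0:ℝ)..1, t ^ a * (1-t) ^ (c-1) * Real.log (1-t))
        + ∫ t in (0:ℝ)..1, t ^ a * (1-t) ^ (c-1) := by
  have i1 : IntervalIntegrable (fun t : ℝ => t ^ (a-1) * (1-t) ^ c * Real.log (1-t)) volume 0 1 :=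
    IbetaLog2 (by linarith) (by linarith)
  have i0 : IntervalIntegrable (fun t : ℝ => t ^ a * (1-t) ^ (c-1)) volume 0 1 :=
    Ibeta (by linarith) (by linarith)
  have i2 : IntervalIntegrable (fun t : ℝ => t ^ a * (1-t) ^ (c-1) * Real.log (1-t)) volume 0 1 :=
    IbetaLog2 (by linarith) (by linarith)
  have hint := ((i1.const_mul a).sub (i2.const_mul c)).sub i0
  have h0 : Tendsto (fun t : ℝ => t ^ a * (1-t) ^ c * Real.log (1-t)) (𝓝[>] (0:ℝ)) (𝓝 0) := by
    have hco : ContinuousAt (fun t : ℝ => t ^ a * (1-t) ^ c * Real.log (1-t)) 0 :=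
      ((Real.continuousAt_rpow_const 0 a (Or.inr ha.le)).mul
        (((continuous_const.sub continuous_id).continuousAt).rpow_const (Or.inl (by norm_num)))).mul
        ((Real.continuousAt_log (by norm_num)).comp ((continuous_const.sub continuous_id).continuousAt))
    have := hco.tendsto.mono_left (nhdsWithin_le_nhds (s := Set.Ioi (0:ℝ)))
    simpa [Real.zero_rpow ha.ne'] using this
  have h1 : Tendsto (fun t : ℝ => t ^ a * (1-t) ^ c * Real.log (1-t)) (𝓝[<] (1:ℝ)) (𝓝 0) := by
    have hsub : Tendsto (fun t : ℝ => 1 - t) (𝓝[<] (1:ℝ)) (𝓝[>] (0:ℝ)) := by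
      refine tendsto_nhdsWithin_of_tendsto_nhds_of_eventually_within _ ?_ ?_
      · exact ((continuous_const.sub continuous_id).tendsto' 1 0 (by norm_num)).mono_left
          nhdsWithin_le_nhds
      · filter_upwards [self_mem_nhdsWithin] with x hx
        simp only [mem_Iio] at hx
        simpa using hx
    have hlogpart : Tendsto (fun t : ℝ => Real.log (1-t) * (1-t) ^ c) (𝓝[<] (1:ℝ)) (𝓝 0) :=
      (tendsto_log_mul_rpow_nhdsGT_zero hc).comp hsub
    have hta : Tendsto (fun t : ℝ => t ^ a) (𝓝[<] (1:ℝ)) (𝓝 1) := by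
      have hco := Real.continuousAt_rpow_const 1 a (Or.inl one_ne_zero)
      have := hco.tendsto.mono_left (nhdsWithin_le_nhds (s := Set.Iio (1:ℝ)))
      simpa using this
    have := hta.mul hlogpart
    simp only [one_mul, mul_zero] at this
    exact this.congr fun t => by ring
  have key := intervalIntegral.integral_eq_sub_of_hasDerivAt_of_tendsto zero_lt_one
    (fun t ht => derivLog2 (a := a) (c := c) ht) hint h0 h1
  rw [intervalIntegral.integral_sub ((i1.const_mul a).sub (i2.const_mul c)) i0,
    intervalIntegral.integral_sub (i1.const_mul a) (i2.const_mul c),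
    intervalIntegral.integral_const_mul, intervalIntegral.integral_const_mul] at key
  linarith

lemma splitAux {p q : ℝ} (h : ℝ → ℝ)
    (I1 : IntervalIntegrable (fun t : ℝ => t ^ p * (1-t) ^ (q+1) * h t) volume 0 1)
    (I2 : IntervalIntegrable (fun t : ℝ => t ^ (p+1) * (1-t) ^ q * h t) volume 0 1) :
    ∫ t in (0:ℝ)..1, t ^ p * (1-t) ^ q * h t
      = (∫ t in (0:ℝ)..1, t ^ p * (1-t) ^ (q+1) * h t)
        + ∫ t in (0:ℝ)..1, t ^ (p+1) * (1-t) ^ q * h t := by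
  rw [← intervalIntegral.integral_add I1 I2]
  apply intervalIntegral.integral_congr_ae
  filter_upwards [(Set.countable_singleton (1:ℝ)).ae_notMem volume] with t ht1 htI
  rw [uIoc_of_le (zero_le_one : (0:ℝ) ≤ 1)] at htI
  have ht0 : t ≠ 0 := htI.1.ne'
  have ht1' : (1:ℝ) - t ≠ 0 := sub_ne_zero.2 fun hh => ht1 (by simp [hh.symm])
  rw [Real.rpow_add_one ht0, Real.rpow_add_one ht1']
  ring
end aux

/-- Functional relations of the dual beta function:
`â β_d(â, ĉ+1) = ĉ β_d(â+1, ĉ)` and `(â+ĉ) β_d(â, ĉ+1) = ĉ β_d(â, ĉ)`. -/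
theorem dualBeta_functional_relations (a b c d : ℝ) (ha : 0 < a) (hc : 0 < c) :
    ((inl a + b • ε) : DualNumber ℝ) * dualBeta a b (c + 1) d =
        ((inl c + d • ε) : DualNumber ℝ) * dualBeta (a + 1) b c d ∧
      ((inl (a + c) + (b + d) • ε) : DualNumber ℝ) * dualBeta a b (c + 1) d =
        ((inl c + d • ε) : DualNumber ℝ) * dualBeta a b c d := by
  have ha1 : (-1:ℝ) < a - 1 := by linarith
  have hc1 : (-1:ℝ) < c - 1 := by linarith
  have ha0 : (-1:ℝ) < a := by linarith
  have hc0 : (-1:ℝ) < c := by linarith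
  have e1 := ftc1 ha hc
  have e2 := ftc2 ha hc
  have e3 := ftc3 ha hc
  have j1 : IntervalIntegrable
      (fun t : ℝ => t ^ (a-1) * (1-t) ^ (c-1+1) * (fun _ : ℝ => (1:ℝ)) t) volume 0 1 := by
    simp only [mul_one, sub_add_cancel]; exact Ibeta ha1 hc0
  have j2 : IntervalIntegrable
      (fun t : ℝ => t ^ (a-1+1) * (1-t) ^ (c-1) * (fun _ : ℝ => (1:ℝ)) t) volume 0 1 := by
    simp only [mul_one, sub_add_cancel]; exact Ibeta ha0 hc1
  have s1 := splitAux (p := a-1) (q := c-1) (fun _ : ℝ => (1:ℝ)) j1 j2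
  simp only [mul_one, sub_add_cancel] at s1
  have k1 : IntervalIntegrable
      (fun t : ℝ => t ^ (a-1) * (1-t) ^ (c-1+1) * Real.log t) volume 0 1 := by
    simp only [sub_add_cancel]; exact IbetaLog1 ha1 hc0
  have k2 : IntervalIntegrable
      (fun t : ℝ => t ^ (a-1+1) * (1-t) ^ (c-1) * Real.log t) volume 0 1 := by
    simp only [sub_add_cancel]; exact IbetaLog1 ha0 hc1
  have s2 := splitAux (p := a-1) (q := c-1) (fun t : ℝ => Real.log t) k1 k2
  simp only [sub_add_cancel] at s2
  have l1 : IntervalIntegrable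
      (fun t : ℝ => t ^ (a-1) * (1-t) ^ (c-1+1) * Real.log (1-t)) volume 0 1 := by
    simp only [sub_add_cancel]; exact IbetaLog2 ha1 hc0
  have l2 : IntervalIntegrable
      (fun t : ℝ => t ^ (a-1+1) * (1-t) ^ (c-1) * Real.log (1-t)) volume 0 1 := by
    simp only [sub_add_cancel]; exact IbetaLog2 ha0 hc1
  have s3 := splitAux (p := a-1) (q := c-1) (fun t : ℝ => Real.log (1-t)) l1 l2
  simp only [sub_add_cancel] at s3
  simp only [dualBeta, add_sub_cancel_right]
  refine ⟨TrivSqZeroExt.ext ?_ ?_, TrivSqZeroExt.ext ?_ ?_⟩ <;>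
    simp only [fst_mul, snd_mul, fst_add, snd_add, fst_inl, snd_inl, fst_smul, snd_smul,
      DualNumber.fst_eps, DualNumber.snd_eps, smul_eq_mul, smul_zero, mul_zero, add_zero,
      zero_add, mul_one, op_smul_eq_mul]
  · exact e1
  · linear_combination b * e2 + d * e3
  · linear_combination e1 - c * s1
  · linear_combination b * e2 + d * e3 - c * b * s2 - c * d * s3 - d * s1
end aux
end

section
/- (Functional relations of the dual beta function, part 3.) Let â = a + ε b, ĉ = c + ε d, ê = e + ε f, ĝ = g + ε h be real dual numbers with a > 0, c > 0, e > 0, g > 0. Then β_d(â, ĉ) · β_d(â + ĉ, ê) · β_d(â + ĉ + ê, ĝ) · Γ_d(â + ĉ + ê + ĝ) = Γ_d(â) · Γ_d(ĉ) · Γ_d(ê) · Γ_d(ĝ) in DualNumber ℝ. -/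
open TrivSqZeroExt MeasureTheory
open scoped DualNumber

namespace DualBetaAux

lemma ofReal_integrand {p q : ℝ} (t : ℝ) (h0 : 0 ≤ t) (h1 : t ≤ 1) :
    (t : ℂ) ^ ((p : ℂ) - 1) * ((1 : ℂ) - t) ^ ((q : ℂ) - 1)
      = ((t ^ (p - 1) * (1 - t) ^ (q - 1) : ℝ) : ℂ) := by
  push_cast
  rw [Complex.ofReal_cpow h0, Complex.ofReal_cpow (by linarith)]
  push_cast
  ring

lemma B_integrable {p q : ℝ} (hp : 0 < p) (hq : 0 < q) :
    IntervalIntegrable (fun t : ℝ => t ^ (p - 1) * (1 - t) ^ (q - 1)) volume 0 1 := by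
  have hconv := Complex.betaIntegral_convergent (u := p) (v := q) (by simpa) (by simpa)
  refine hconv.mono_fun ?_ ?_
  · apply Measurable.aestronglyMeasurable
    fun_prop
  · refine (ae_restrict_iff' measurableSet_uIoc).2 (Filter.Eventually.of_forall fun t ht => ?_)
    rw [Set.uIoc_of_le (by norm_num : (0:ℝ) ≤ 1)] at ht
    simp only [ofReal_integrand t ht.1.le ht.2, Complex.norm_real, le_refl]

lemma betaIntegral_ofReal {p q : ℝ} :
    Complex.betaIntegral p q
      = ((∫ t in (0:ℝ)..1, t ^ (p - 1) * (1 - t) ^ (q - 1) : ℝ) : ℂ) := by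
  rw [Complex.betaIntegral, ← intervalIntegral.integral_ofReal]
  refine intervalIntegral.integral_congr fun t ht => ?_
  rw [Set.uIcc_of_le (by norm_num : (0:ℝ) ≤ 1)] at ht
  exact ofReal_integrand t ht.1 ht.2

lemma Gamma_mul_B {p q : ℝ} (hp : 0 < p) (hq : 0 < q) :
    Real.Gamma p * Real.Gamma q
      = Real.Gamma (p + q) * ∫ t in (0:ℝ)..1, t ^ (p - 1) * (1 - t) ^ (q - 1) := by
  have := Complex.Gamma_mul_Gamma_eq_betaIntegral (s := p) (t := q) (by simpa) (by simpa)
  rw [betaIntegral_ofReal, ← Complex.ofReal_add, Complex.Gamma_ofReal,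
    Complex.Gamma_ofReal, Complex.Gamma_ofReal, ← Complex.ofReal_mul, ← Complex.ofReal_mul] at this
  exact_mod_cast this

lemma hasDerivAt_rpow_exp {t : ℝ} (ht : 0 < t) (q x : ℝ) :
    HasDerivAt (fun y : ℝ => t ^ (y - 1) * (1 - t) ^ (q - 1))
      (t ^ (x - 1) * (1 - t) ^ (q - 1) * Real.log t) x := by
  have h1 : HasDerivAt (fun y : ℝ => t ^ (y - 1)) (t ^ (x - 1) * Real.log t * 1) x :=
    (Real.hasStrictDerivAt_const_rpow ht (x - 1)).hasDerivAt.comp x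
      ((hasDerivAt_id x).sub_const 1)
  exact (h1.mul_const _).congr_deriv (by ring)

lemma hasDerivAt_B {p q : ℝ} (hp : 0 < p) (hq : 0 < q) :
    HasDerivAt (fun x : ℝ => ∫ t in (0:ℝ)..1, t ^ (x - 1) * (1 - t) ^ (q - 1))
      (∫ t in (0:ℝ)..1, t ^ (p - 1) * (1 - t) ^ (q - 1) * Real.log t) p := by
  have key := intervalIntegral.hasDerivAt_integral_of_dominated_loc_of_deriv_le
    (F := fun x t => t ^ (x - 1) * (1 - t) ^ (q - 1))
    (F' := fun x t => t ^ (x - 1) * (1 - t) ^ (q - 1) * Real.log t)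
    (x₀ := p) (a := 0) (b := 1) (μ := volume)
    (bound := fun t => 4 / p * (t ^ (p / 4 - 1) * (1 - t) ^ (q - 1)))
    (Metric.ball_mem_nhds p (show (0:ℝ) < p / 2 by positivity))
    (Filter.Eventually.of_forall fun x => by
      apply Measurable.aestronglyMeasurable; fun_prop)
    (B_integrable hp hq)
    (((by fun_prop : Measurable fun t : ℝ => t ^ (p - 1) * (1 - t) ^ (q - 1)).mul
      Real.measurable_log).aestronglyMeasurable)
    ?_ ?_ ?_
  · exact key.2
  · refine Filter.Eventually.of_forall fun t ht x hx => ?_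
    rw [Set.uIoc_of_le (by norm_num : (0:ℝ) ≤ 1)] at ht
    obtain ⟨ht0, ht1⟩ := ht
    rcases eq_or_lt_of_le ht1 with rfl | ht1'
    · simp only [Real.log_one, mul_zero, norm_zero]
      positivity
    have hxp : p / 2 - 1 ≤ x - 1 := by
      have h := abs_lt.1 (by simpa [Real.dist_eq] using Metric.mem_ball.1 hx)
      linarith [h.1]
    have h1 : t ^ (x - 1) ≤ t ^ (p / 2 - 1) :=
      Real.rpow_le_rpow_of_exponent_ge ht0 ht1 hxp
    have hlog : |Real.log t| ≤ t ^ (-(p / 4)) * (4 / p) := by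
      rw [abs_of_nonpos (Real.log_nonpos ht0.le ht1)]
      have h := Real.log_le_rpow_div (x := t⁻¹) (by positivity) (by positivity : (0:ℝ) < p / 4)
      rw [Real.log_inv, Real.inv_rpow ht0.le, ← Real.rpow_neg ht0.le] at h
      calc -Real.log t ≤ t ^ (-(p / 4)) / (p / 4) := h
        _ = t ^ (-(p / 4)) * (4 / p) := by
            rw [div_eq_mul_inv, inv_div]
    have hnorm : ‖t ^ (x - 1) * (1 - t) ^ (q - 1) * Real.log t‖
        = t ^ (x - 1) * (1 - t) ^ (q - 1) * |Real.log t| := by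
      rw [Real.norm_eq_abs, abs_mul, abs_mul,
        abs_of_nonneg (Real.rpow_nonneg ht0.le _),
        abs_of_nonneg (Real.rpow_nonneg (by linarith) _)]
    rw [hnorm]
    calc t ^ (x - 1) * (1 - t) ^ (q - 1) * |Real.log t|
        ≤ t ^ (p / 2 - 1) * (1 - t) ^ (q - 1) * (t ^ (-(p / 4)) * (4 / p)) := by
          apply mul_le_mul
          · exact mul_le_mul_of_nonneg_right h1 (Real.rpow_nonneg (by linarith) _)
          · exact hlog
          · exact abs_nonneg _
          · exact mul_nonneg (Real.rpow_nonneg ht0.le _) (Real.rpow_nonneg (by linarith) _)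
      _ = 4 / p * (t ^ (p / 4 - 1) * (1 - t) ^ (q - 1)) := by
          have ht2 : t ^ (p / 2 - 1) * t ^ (-(p / 4)) = t ^ (p / 4 - 1) := by
            rw [← Real.rpow_add ht0]; congr 1; ring
          calc t ^ (p / 2 - 1) * (1 - t) ^ (q - 1) * (t ^ (-(p / 4)) * (4 / p))
              = t ^ (p / 2 - 1) * t ^ (-(p / 4)) * ((1 - t) ^ (q - 1) * (4 / p)) := by ring
            _ = _ := by rw [ht2]; ring
  · exact (B_integrable (by positivity : (0:ℝ) < p / 4) hq).const_mul _
  · refine Filter.Eventually.of_forall fun t ht x _ => ?_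
    rw [Set.uIoc_of_le (by norm_num : (0:ℝ) ≤ 1)] at ht
    exact hasDerivAt_rpow_exp ht.1 q x

lemma B_symm (p q : ℝ) :
    (∫ t in (0:ℝ)..1, t ^ (p - 1) * (1 - t) ^ (q - 1))
      = ∫ t in (0:ℝ)..1, t ^ (q - 1) * (1 - t) ^ (p - 1) := by
  have h := intervalIntegral.integral_comp_sub_left (a := 0) (b := 1)
    (fun t : ℝ => t ^ (q - 1) * (1 - t) ^ (p - 1)) 1
  norm_num at h
  rw [← h]
  refine intervalIntegral.integral_congr fun t _ => ?_
  ring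

lemma logint_symm (p q : ℝ) :
    (∫ t in (0:ℝ)..1, t ^ (p - 1) * (1 - t) ^ (q - 1) * Real.log (1 - t))
      = ∫ t in (0:ℝ)..1, t ^ (q - 1) * (1 - t) ^ (p - 1) * Real.log t := by
  have h := intervalIntegral.integral_comp_sub_left (a := 0) (b := 1)
    (fun t : ℝ => t ^ (q - 1) * (1 - t) ^ (p - 1) * Real.log t) 1
  norm_num at h
  rw [← h]
  refine intervalIntegral.integral_congr fun t _ => ?_
  ring

lemma gamma_hasDerivAt {r : ℝ} (hr : 0 < r) :
    HasDerivAt Real.Gamma (deriv Real.Gamma r) r :=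
  (Real.differentiableAt_Gamma fun m =>
    ne_of_gt (by linarith [Nat.cast_nonneg (α := ℝ) m])).hasDerivAt

lemma key1 {p q : ℝ} (hp : 0 < p) (hq : 0 < q) :
    (∫ t in (0:ℝ)..1, t ^ (p - 1) * (1 - t) ^ (q - 1)) * deriv Real.Gamma (p + q)
      + (∫ t in (0:ℝ)..1, t ^ (p - 1) * (1 - t) ^ (q - 1) * Real.log t) * Real.Gamma (p + q)
      = deriv Real.Gamma p * Real.Gamma q := by
  have hΦ := (hasDerivAt_B hp hq).mul
    ((gamma_hasDerivAt (by positivity : (0:ℝ) < p + q)).comp p ((hasDerivAt_id p).add_const q))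
  have hΨ : HasDerivAt (fun x => Real.Gamma x * Real.Gamma q)
      (deriv Real.Gamma p * Real.Gamma q) p := (gamma_hasDerivAt hp).mul_const _
  have heq : (fun x => Real.Gamma x * Real.Gamma q) =ᶠ[nhds p]
      fun x => (∫ t in (0:ℝ)..1, t ^ (x - 1) * (1 - t) ^ (q - 1)) * Real.Gamma (x + q) := by
    filter_upwards [Ioi_mem_nhds hp] with x hx
    rw [Gamma_mul_B hx hq, mul_comm]
  have huniq := hΨ.unique (hΦ.congr_of_eventuallyEq heq)
  simp only [Function.comp_apply, id_eq, mul_one] at huniq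
  linear_combination -huniq

lemma key2 {p q : ℝ} (hp : 0 < p) (hq : 0 < q) :
    (∫ t in (0:ℝ)..1, t ^ (p - 1) * (1 - t) ^ (q - 1)) * deriv Real.Gamma (p + q)
      + (∫ t in (0:ℝ)..1, t ^ (p - 1) * (1 - t) ^ (q - 1) * Real.log (1 - t))
          * Real.Gamma (p + q)
      = Real.Gamma p * deriv Real.Gamma q := by
  have h := key1 hq hp
  rw [← B_symm p q, ← logint_symm p q, add_comm q p, mul_comm (deriv Real.Gamma q)] at h
  exact h

lemma pair (a b c d : ℝ) (ha : 0 < a) (hc : 0 < c) :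
    dualBeta a b c d * dualGamma (a + c) (b + d) = dualGamma a b * dualGamma c d := by
  have h0 := Gamma_mul_B ha hc
  have h1 := key1 ha hc
  have h2 := key2 ha hc
  unfold dualBeta dualGamma
  apply TrivSqZeroExt.ext
  · simp only [fst_mul, fst_add, fst_inl, fst_smul, DualNumber.fst_eps, smul_eq_mul,
      mul_zero, add_zero]
    linarith [h0]
  · simp only [snd_mul, snd_add, snd_inl, snd_smul, fst_mul, fst_add, fst_inl, fst_smul,
      DualNumber.fst_eps, DualNumber.snd_eps, smul_eq_mul, mul_zero, add_zero, zero_add,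
      mul_one, op_smul_eq_smul]
    linear_combination b * h1 + d * h2

end DualBetaAux

/-- `β_d(â, ĉ) β_d(â+ĉ, ê) β_d(â+ĉ+ê, ĝ) Γ_d(â+ĉ+ê+ĝ) = Γ_d(â) Γ_d(ĉ) Γ_d(ê) Γ_d(ĝ)`. -/
theorem dualBeta_fourfold_relation (a b c d e f g h : ℝ)
    (ha : 0 < a) (hc : 0 < c) (he : 0 < e) (hg : 0 < g) :
    dualBeta a b c d * dualBeta (a + c) (b + d) e f *
        dualBeta (a + c + e) (b + d + f) g h *
        dualGamma (a + c + e + g) (b + d + f + h) =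
      dualGamma a b * dualGamma c d * dualGamma e f * dualGamma g h := by
  have h1 := DualBetaAux.pair (a + c + e) (b + d + f) g h (by positivity) hg
  have h2 := DualBetaAux.pair (a + c) (b + d) e f (by positivity) he
  have h3 := DualBetaAux.pair a b c d ha hc
  linear_combination (dualBeta a b c d * dualBeta (a + c) (b + d) e f) * h1
    + (dualBeta a b c d * dualGamma g h) * h2
    + (dualGamma e f * dualGamma g h) * h3
end

section
/- (Convergence of the dual generalized hypergeometric series for p ≤ q.) Let p ≤ q, let â₁, …, â_p and b̂₁, …, b̂_q be real dual numbers such that the real part of each b̂_j is not equal to 0, −1, −2, …, and let x̂ be any real dual number. Then the family of dual numbers k ↦ (∏_{i=1}^{p} (â_i)_k) · Ring.inverse(∏_{j=1}^{q} (b̂_j)_k) · x̂^k / k! is Summable in DualNumber ℝ (with its product topology). -/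
open TrivSqZeroExt
open scoped DualNumber

open Filter Topology

private lemma dual_tendsto {f : ℕ → DualNumber ℝ} {z : DualNumber ℝ}
    (h1 : Tendsto (fun k => (f k).fst) atTop (𝓝 z.fst))
    (h2 : Tendsto (fun k => (f k).snd) atTop (𝓝 z.snd)) :
    Tendsto f atTop (𝓝 z) := by
  rw [TrivSqZeroExt.nhds_def]; exact h1.prodMk h2

private lemma dual_inverse_eq_inv (y : DualNumber ℝ) (hy : y.fst ≠ 0) :
    Ring.inverse y = y⁻¹ := by
  have hu : IsUnit y := isUnit_iff_isUnit_fst.mpr (isUnit_iff_ne_zero.mpr hy)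
  calc Ring.inverse y = Ring.inverse y * (y * y⁻¹) := by
        rw [TrivSqZeroExt.mul_inv_cancel hy, mul_one]
    _ = Ring.inverse y * y * y⁻¹ := (mul_assoc _ _ _).symm
    _ = y⁻¹ := by rw [Ring.inverse_mul_cancel _ hu, one_mul]

private lemma tendsto_addk_inv (c : ℝ) :
    Tendsto (fun k : ℕ => (c + (k : ℝ))⁻¹) atTop (𝓝 0) :=
  (tendsto_atTop_add_const_left atTop c tendsto_natCast_atTop_atTop).inv_tendsto_atTop

private lemma tendsto_dual_inv_zero (b : DualNumber ℝ)
    (hne : ∀ k : ℕ, b.fst + (k : ℝ) ≠ 0) :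
    Tendsto (fun k : ℕ => (b + (k : DualNumber ℝ))⁻¹) atTop (𝓝 0) := by
  have hi : Tendsto (fun k : ℕ => (b.fst + (k : ℝ))⁻¹) atTop (𝓝 0) := tendsto_addk_inv b.fst
  apply dual_tendsto
  · exact hi.congr fun k => by simp
  · have h2 : Tendsto (fun k : ℕ => -((b.fst + (k:ℝ))⁻¹ * b.snd * (b.fst + (k:ℝ))⁻¹))
        atTop (𝓝 0) := by
      simpa using ((hi.mul tendsto_const_nhds).mul hi).neg
    refine h2.congr fun k => ?_
    simp [op_smul_eq_smul, smul_eq_mul]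

private lemma tendsto_dual_inverse_zero (b : DualNumber ℝ)
    (hne : ∀ k : ℕ, b.fst + (k : ℝ) ≠ 0) :
    Tendsto (fun k : ℕ => Ring.inverse (b + (k : DualNumber ℝ))) atTop (𝓝 0) := by
  refine (tendsto_dual_inv_zero b hne).congr fun k => ?_
  rw [dual_inverse_eq_inv _ (by simpa using hne k)]

private lemma tendsto_dual_pair_one (a b : DualNumber ℝ)
    (hne : ∀ k : ℕ, b.fst + (k : ℝ) ≠ 0) :
    Tendsto (fun k : ℕ => (a + (k : DualNumber ℝ)) * Ring.inverse (b + (k : DualNumber ℝ)))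
      atTop (𝓝 1) := by
  have h2 : Tendsto (fun k : ℕ => 1 + (a - b) * (b + (k : DualNumber ℝ))⁻¹) atTop (𝓝 1) := by
    simpa using (tendsto_const_nhds (x := (1 : DualNumber ℝ))).add
      ((tendsto_const_nhds (x := a - b)).mul (tendsto_dual_inv_zero b hne))
  refine h2.congr fun k => ?_
  have hb : (b + (k : DualNumber ℝ)).fst ≠ 0 := by simpa using hne k
  have hab : (a + (k : DualNumber ℝ)) = (b + (k : DualNumber ℝ)) + (a - b) := by ring
  rw [dual_inverse_eq_inv _ hb, hab, add_mul, TrivSqZeroExt.mul_inv_cancel hb]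

set_option synthInstance.maxHeartbeats 800000 in
/-- Convergence of the dual generalized hypergeometric series for `p ≤ q`, for any dual `x̂`. -/
theorem dual_hypergeometric_summable_of_le (p q : ℕ) (hpq : p ≤ q)
    (A : Fin p → DualNumber ℝ) (B : Fin q → DualNumber ℝ)
    (hB : ∀ j, ∀ n : ℕ, (B j).fst ≠ -n) (x : DualNumber ℝ) :
    Summable (fun k : ℕ =>
      (k.factorial : ℝ)⁻¹ •
        ((∏ i, dualPoch (A i) k) * Ring.inverse (∏ j, dualPoch (B j) k) * x ^ k)) := by
  classical
  have hne : ∀ j, ∀ k : ℕ, (B j).fst + (k : ℝ) ≠ 0 := fun j k h => hB j k (by linarith)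
  set f : ℕ → DualNumber ℝ := fun k =>
    (k.factorial : ℝ)⁻¹ •
      ((∏ i, dualPoch (A i) k) * Ring.inverse (∏ j, dualPoch (B j) k) * x ^ k) with hf
  let e : Fin p ↪ Fin q := ⟨Fin.castLE hpq, Fin.castLE_injective hpq⟩
  let T : Finset (Fin q) := Finset.univ.map e
  set r : ℕ → DualNumber ℝ := fun k =>
    (∏ i : Fin p, ((A i + (k : DualNumber ℝ)) * Ring.inverse (B (e i) + (k : DualNumber ℝ)))) *
    (∏ j ∈ Tᶜ, Ring.inverse (B j + (k : DualNumber ℝ))) *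
    (((k : ℝ) + 1)⁻¹ • x) with hr
  have key : ∀ k, f (k + 1) = f k * r k := by
    intro k
    have hP : (∏ i, dualPoch (A i) (k + 1))
        = (∏ i, dualPoch (A i) k) * ∏ i, (A i + (k : DualNumber ℝ)) := by
      rw [← Finset.prod_mul_distrib]; rfl
    have hQ : (∏ j, dualPoch (B j) (k + 1))
        = (∏ j, dualPoch (B j) k) * ∏ j, (B j + (k : DualNumber ℝ)) := by
      rw [← Finset.prod_mul_distrib]; rfl
    have hinvprod : Ring.inverse (∏ j, (B j + (k : DualNumber ℝ)))
        = ∏ j, Ring.inverse (B j + (k : DualNumber ℝ)) :=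
      map_prod (MonoidWithZero.inverse (M := DualNumber ℝ)) _ _
    have hsplit : (∏ j, Ring.inverse (B j + (k : DualNumber ℝ)))
        = (∏ i : Fin p, Ring.inverse (B (e i) + (k : DualNumber ℝ)))
          * ∏ j ∈ Tᶜ, Ring.inverse (B j + (k : DualNumber ℝ)) := by
      rw [← Finset.prod_mul_prod_compl T, Finset.prod_map]
    have hfac : ((k + 1).factorial : ℝ)⁻¹ = (k.factorial : ℝ)⁻¹ * ((k : ℝ) + 1)⁻¹ := by
      rw [Nat.factorial_succ]; push_cast; rw [mul_inv, mul_comm]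
    simp only [hf, hr, hP, hQ, Ring.mul_inverse_rev, hinvprod, hsplit,
      Finset.prod_mul_distrib, smul_mul_assoc, mul_smul_comm, smul_smul, hfac]
    rw [mul_comm ((k.factorial : ℝ))⁻¹ ((k : ℝ) + 1)⁻¹]
    congr 1
    ring
  have hr0 : Tendsto r atTop (𝓝 0) := by
    have h1 : Tendsto (fun k : ℕ => ∏ i : Fin p,
        ((A i + (k : DualNumber ℝ)) * Ring.inverse (B (e i) + (k : DualNumber ℝ))))
        atTop (𝓝 (∏ _i : Fin p, 1)) :=
      tendsto_finset_prod _ fun i _ => tendsto_dual_pair_one (A i) (B (e i)) (hne (e i))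
    have h2 : Tendsto (fun k : ℕ => ∏ j ∈ Tᶜ, Ring.inverse (B j + (k : DualNumber ℝ)))
        atTop (𝓝 (∏ _j ∈ Tᶜ, (0 : DualNumber ℝ))) :=
      tendsto_finset_prod _ fun j _ => tendsto_dual_inverse_zero (B j) (hne j)
    have h3 : Tendsto (fun k : ℕ => ((k : ℝ) + 1)⁻¹ • x) atTop (𝓝 0) := by
      have : Tendsto (fun k : ℕ => ((k : ℝ) + 1)⁻¹) atTop (𝓝 0) := by
        simpa [add_comm] using tendsto_addk_inv 1
      simpa using this.smul_const x
    have h4 := (h1.mul h2).mul h3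
    rw [hr]
    simpa using h4
  have hnorm : Tendsto (fun k => ‖r k‖) atTop (𝓝 0) := by
    simpa using hr0.norm
  have hev : ∀ᶠ k in atTop, ‖r k‖ ≤ 1 / 2 := by
    filter_upwards [hnorm.eventually_lt_const (by norm_num : (0:ℝ) < 1/2)] with k hk
    exact hk.le
  refine summable_of_ratio_norm_eventually_le (r := 1 / 2) (by norm_num) ?_
  filter_upwards [hev] with k hk
  calc ‖f (k + 1)‖ = ‖f k * r k‖ := by rw [key k]
    _ ≤ ‖f k‖ * ‖r k‖ := norm_mul_le _ _
    _ ≤ ‖f k‖ * (1 / 2) := mul_le_mul_of_nonneg_left hk (norm_nonneg _)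
    _ = 1 / 2 * ‖f k‖ := mul_comm _ _
end

section
/- (Dual binomial theorem.) Let â be a real dual number and let x̂ = x₁ + ε x₂ be a real dual number with |x₁| < 1 (so 1 − x₁ > 0). Then Σ_{k=0}^{∞} (â)_k · x̂^k / k! = (1 − x̂)^{−â}, the sum (tsum) taken in DualNumber ℝ and the right-hand side being the dual power with base 1 − x̂ and exponent −â. -/
set_option maxHeartbeats 1000000
set_option synthInstance.maxHeartbeats 200000


open TrivSqZeroExt
open scoped DualNumber

/-- The dual power `ŵ^ĉ = w₁^{c₁} (1 + ε (c₂ log w₁ + c₁ w₂ / w₁))`, for `w₁ > 0`. -/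
noncomputable def dualPow (w c : DualNumber ℝ) : DualNumber ℝ :=
  inl (w.fst ^ c.fst) * (1 + (c.snd * Real.log w.fst + c.fst * w.snd / w.fst) • ε)

namespace DualBinomialAux

/-- The coefficients of the dual binomial series. -/
noncomputable def dbc (a x : DualNumber ℝ) (k : ℕ) : DualNumber ℝ :=
  (k.factorial : ℝ)⁻¹ • (dualPoch a k * x ^ k)

lemma dbc_zero (a x : DualNumber ℝ) : dbc a x 0 = 1 := by
  simp [dbc, dualPoch]

lemma dbc_succ (a x : DualNumber ℝ) (k : ℕ) :
    dbc a x (k + 1) = ((k : ℝ) + 1)⁻¹ • ((a + (k : DualNumber ℝ)) * x * dbc a x k) := by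
  rw [dbc, dbc, mul_smul_comm, smul_smul]
  show (((k + 1).factorial : ℝ))⁻¹ • (dualPoch a k * (a + (k : DualNumber ℝ)) * x ^ (k + 1)) = _
  congr 1
  · rw [Nat.factorial_succ]
    push_cast
    rw [mul_inv]
  · ring

lemma norm_natCast_dual (k : ℕ) : ‖((k : ℕ) : DualNumber ℝ)‖ = (k : ℝ) := by
  rw [norm_def]
  simp

lemma norm_dualPoch_le (a : DualNumber ℝ) (k : ℕ) :
    ‖dualPoch a k‖ ≤ ((⌈‖a‖⌉₊ + 1).ascFactorial k : ℝ) := by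
  induction k with
  | zero => simp [dualPoch]
  | succ k ih =>
    have hm : ‖a‖ ≤ ((⌈‖a‖⌉₊ + 1 : ℕ) : ℝ) := by
      refine (Nat.le_ceil ‖a‖).trans ?_
      exact_mod_cast Nat.le_succ _
    calc ‖dualPoch a (k + 1)‖ = ‖dualPoch a k * (a + (k : DualNumber ℝ))‖ := by rw [dualPoch]
      _ ≤ ‖dualPoch a k‖ * ‖a + (k : DualNumber ℝ)‖ := norm_mul_le _ _
      _ ≤ ((⌈‖a‖⌉₊ + 1).ascFactorial k : ℝ) * (((⌈‖a‖⌉₊ + 1 : ℕ) : ℝ) + k) := by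
          refine mul_le_mul ih ?_ (norm_nonneg _) (by positivity)
          calc ‖a + (k : DualNumber ℝ)‖ ≤ ‖a‖ + ‖((k : ℕ) : DualNumber ℝ)‖ := norm_add_le _ _
            _ = ‖a‖ + (k : ℝ) := by rw [norm_natCast_dual]
            _ ≤ _ := by linarith
      _ = (((⌈‖a‖⌉₊ + 1) + k) * (⌈‖a‖⌉₊ + 1).ascFactorial k : ℕ) := by push_cast; ring
      _ = _ := by rw [← Nat.ascFactorial_succ]

lemma ascFactorial_le (m k : ℕ) (hm : 1 ≤ m) :
    (m.ascFactorial k : ℝ) ≤ (k.factorial : ℝ) * ((m + k : ℕ) : ℝ) ^ m := by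
  have h1 : m.ascFactorial k = k.factorial * (m + k - 1).choose k :=
    Nat.ascFactorial_eq_factorial_mul_choose' m k
  have h2 : (m + k - 1).choose k ≤ (m + k) ^ m := by
    have hk : k ≤ m + k - 1 := by omega
    have hsymm := Nat.choose_symm hk
    have h3 : m + k - 1 - k = m - 1 := by omega
    calc (m + k - 1).choose k = (m + k - 1).choose (m - 1) := by rw [← hsymm, h3]
      _ ≤ (m + k - 1) ^ (m - 1) := Nat.choose_le_pow _ _
      _ ≤ (m + k) ^ (m - 1) := Nat.pow_le_pow_left (by omega) _
      _ ≤ (m + k) ^ m := Nat.pow_le_pow_right (by omega) (by omega)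
  calc (m.ascFactorial k : ℝ) = ((k.factorial * (m + k - 1).choose k : ℕ) : ℝ) := by
        rw [h1]
    _ ≤ ((k.factorial * (m + k) ^ m : ℕ) : ℝ) := by
        exact_mod_cast Nat.mul_le_mul_left _ h2
    _ = (k.factorial : ℝ) * ((m + k : ℕ) : ℝ) ^ m := by push_cast; ring

lemma norm_pow_dual (x : DualNumber ℝ) (k : ℕ) :
    ‖x ^ k‖ = |x.fst| ^ k + (k : ℝ) * |x.fst| ^ (k - 1) * |x.snd| := by
  rw [norm_def, fst_pow, snd_pow]
  rw [Real.norm_eq_abs, Real.norm_eq_abs, abs_pow]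
  congr 1
  rw [smul_eq_mul, nsmul_eq_mul, Nat.pred_eq_sub_one, abs_mul, abs_mul, abs_pow, Nat.abs_cast]
  ring

lemma norm_dbc_le (a x : DualNumber ℝ) (k : ℕ) :
    ‖dbc a x k‖ ≤ (((⌈‖a‖⌉₊ + 1) + k : ℕ) : ℝ) ^ (⌈‖a‖⌉₊ + 1) *
      (|x.fst| ^ k + (k : ℝ) * |x.fst| ^ (k - 1) * |x.snd|) := by
  set m := ⌈‖a‖⌉₊ + 1 with hm_def
  have hfac : (0 : ℝ) < (k.factorial : ℝ) := by exact_mod_cast k.factorial_pos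
  have hxk : ‖x ^ k‖ = |x.fst| ^ k + (k : ℝ) * |x.fst| ^ (k - 1) * |x.snd| :=
    norm_pow_dual x k
  have h1 : ‖dbc a x k‖ ≤ (k.factorial : ℝ)⁻¹ * (((m.ascFactorial k : ℕ) : ℝ) * ‖x ^ k‖) := by
    rw [dbc, norm_smul, Real.norm_eq_abs, abs_of_nonneg (by positivity)]
    gcongr
    exact (norm_mul_le _ _).trans (by gcongr; exact norm_dualPoch_le a k)
  refine h1.trans ?_
  have h2 : (k.factorial : ℝ)⁻¹ * ((m.ascFactorial k : ℝ)) ≤ ((m + k : ℕ) : ℝ) ^ m := by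
    rw [inv_mul_le_iff₀ hfac]
    linarith [ascFactorial_le m k (show 1 ≤ m by omega)]
  calc (k.factorial : ℝ)⁻¹ * ((m.ascFactorial k : ℝ) * ‖x ^ k‖)
      = ((k.factorial : ℝ)⁻¹ * (m.ascFactorial k : ℝ)) * ‖x ^ k‖ := by ring
    _ ≤ ((m + k : ℕ) : ℝ) ^ m * ‖x ^ k‖ := by
        exact mul_le_mul_of_nonneg_right h2 (norm_nonneg _)
    _ = _ := by rw [hxk]

lemma summable_geom_aux (M : ℕ) {ρ : ℝ} (h0 : 0 < ρ) (h1 : ρ < 1) :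
    Summable (fun k : ℕ => ((k : ℝ) + 1) ^ M * ρ ^ k) := by
  have h := summable_pow_mul_geometric_of_norm_lt_one (R := ℝ) M
    (r := ρ) (by rwa [Real.norm_eq_abs, abs_of_pos h0])
  have h2 := (summable_nat_add_iff 1).2 h
  have h3 := h2.mul_left ρ⁻¹
  refine h3.congr fun k => ?_
  push_cast
  rw [pow_succ]
  field_simp

lemma fst_dualPow (w c : DualNumber ℝ) : (dualPow w c).fst = w.fst ^ c.fst := by
  simp [dualPow, fst_mul, fst_inl, fst_smul, DualNumber.fst_eps]

lemma snd_dualPow (w c : DualNumber ℝ) :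
    (dualPow w c).snd = w.fst ^ c.fst * (c.snd * Real.log w.fst + c.fst * w.snd / w.fst) := by
  simp [dualPow, snd_mul, fst_inl, snd_inl, snd_smul, fst_smul, DualNumber.snd_eps,
    DualNumber.fst_eps, smul_eq_mul]

lemma dualPow_eq (w c : DualNumber ℝ) :
    dualPow w c = (w.fst ^ c.fst) • (1 : DualNumber ℝ)
      + (w.fst ^ c.fst * (c.snd * Real.log w.fst + c.fst * w.snd / w.fst)) • ε := by
  ext
  · rw [fst_dualPow]
    simp [fst_smul, DualNumber.fst_eps, fst_one, smul_eq_mul]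
  · rw [snd_dualPow]
    simp [snd_smul, DualNumber.snd_eps, snd_one, smul_eq_mul]

lemma dualPow_one_left (c : DualNumber ℝ) : dualPow (1 : DualNumber ℝ) c = 1 := by
  ext
  · simp [fst_dualPow, fst_one, Real.one_rpow]
  · simp [snd_dualPow, fst_one, snd_one, Real.one_rpow, Real.log_one]

lemma dualPow_neg_mul (w c : DualNumber ℝ) (hw : 0 < w.fst) :
    dualPow w (-c) * dualPow w c = 1 := by
  have hrpow : w.fst ^ (-c.fst) * w.fst ^ c.fst = 1 := by
    rw [← Real.rpow_add hw, neg_add_cancel, Real.rpow_zero]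
  ext
  · rw [fst_mul, fst_dualPow, fst_dualPow, fst_neg, fst_one, hrpow]
  · rw [snd_mul, fst_dualPow, snd_dualPow, snd_dualPow, fst_dualPow, fst_neg, snd_neg,
      snd_one, smul_eq_mul, op_smul_eq_smul, smul_eq_mul]
    ring

end DualBinomialAux

open DualBinomialAux

/-- The dual binomial theorem: `Σ_{k} (â)_k x̂^k / k! = (1 - x̂)^{-â}` for `|x₁| < 1`. -/
theorem dual_binomial_theorem (a x : DualNumber ℝ) (hx : |x.fst| < 1) :
    ∑' k : ℕ, (k.factorial : ℝ)⁻¹ • (dualPoch a k * x ^ k) = dualPow (1 - x) (-a) := by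
  classical
  set q := |x.fst| with hq_def
  have hq0 : 0 ≤ q := abs_nonneg _
  have hq1 : q < 1 := hx
  set r : ℝ := 2 / (1 + q) with hr_def
  have h1q : (0:ℝ) < 1 + q := by linarith
  have hr1 : 1 < r := by rw [hr_def, lt_div_iff₀ h1q]; linarith
  have hr0 : 0 < r := lt_trans one_pos hr1
  have hrq : r * q < 1 := by
    rw [hr_def, div_mul_eq_mul_div, div_lt_one h1q]; linarith
  set m : ℕ := ⌈‖a‖⌉₊ + 1 with hm_def
  set W : ℕ → ℝ := fun k => ((m + k : ℕ) : ℝ) ^ m *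
      (q ^ k + (k:ℝ) * q ^ (k-1) * |x.snd|) with hW_def
  have hW0 : ∀ k, 0 ≤ W k := fun k => by positivity
  have hcW : ∀ k, ‖dbc a x k‖ ≤ W k := fun k => norm_dbc_le a x k
  set u : ℕ → ℝ := fun k => ((k:ℝ) + 1) * r ^ k * W k with hu_def
  have hu0 : ∀ k, 0 ≤ u k := fun k => by positivity
  set ρ : ℝ := max (r * q) 2⁻¹ with hρ_def
  have hρ0 : (0:ℝ) < ρ := lt_of_lt_of_le (by norm_num) (le_max_right _ _)
  have hρ1 : ρ < 1 := max_lt hrq (by norm_num)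
  have hρh : (1:ℝ) ≤ 2 * ρ := by
    have := le_max_right (r*q) 2⁻¹
    rw [← hρ_def] at this; linarith
  have hrqρ : r * q ≤ ρ := le_max_left _ _
  have hu_le : ∀ k, u k ≤ ((((m+1:ℕ)):ℝ)^m * (1 + 2*r*|x.snd|)) *
      (((k:ℝ)+1)^(m+2) * ρ^k) := by
    intro k
    have hk0 : (0:ℝ) ≤ (k:ℝ) := Nat.cast_nonneg k
    have hρk : (0:ℝ) ≤ ρ^k := by positivity
    have hA : ((m + k : ℕ) : ℝ)^m ≤ (((m+1:ℕ)):ℝ)^m * ((k:ℝ)+1)^m := by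
      rw [← mul_pow]
      apply pow_le_pow_left₀ (Nat.cast_nonneg _)
      push_cast
      nlinarith [Nat.cast_nonneg (α := ℝ) m, Nat.cast_nonneg (α := ℝ) k]
    have hB1 : r^k * q^k ≤ ρ^k := by
      rw [← mul_pow]; exact pow_le_pow_left₀ (by positivity) hrqρ k
    have hB2 : (k:ℝ) * (r^k * q^(k-1)) ≤ (k:ℝ) * (2 * r * ρ^k) := by
      rcases Nat.eq_zero_or_pos k with rfl | hk
      · simp
      · refine mul_le_mul_of_nonneg_left ?_ hk0
        have e1 : r^k = r * r^(k-1) := by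
          conv_lhs => rw [← Nat.succ_pred_eq_of_pos hk]
          rw [pow_succ', Nat.pred_eq_sub_one]
        have h22 : (r*q)^(k-1) ≤ ρ^(k-1) := pow_le_pow_left₀ (by positivity) hrqρ _
        have h23 : ρ^(k-1) ≤ 2 * ρ^k := by
          have e2 : ρ^k = ρ * ρ^(k-1) := by
            conv_lhs => rw [← Nat.succ_pred_eq_of_pos hk]
            rw [pow_succ', Nat.pred_eq_sub_one]
          rw [e2]
          nlinarith [pow_nonneg (le_of_lt hρ0) (k-1)]
        calc r^k * q^(k-1) = r * (r*q)^(k-1) := by rw [e1, mul_pow]; ring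
          _ ≤ r * ρ^(k-1) := by nlinarith [hr0]
          _ ≤ r * (2*ρ^k) := by nlinarith [hr0]
          _ = 2*r*ρ^k := by ring
    have hmain2 : r^k * (q^k + (k:ℝ)*q^(k-1)*|x.snd|) ≤
        (1 + 2*r*|x.snd|) * (((k:ℝ)+1) * ρ^k) := by
      have expand : r^k * (q^k + (k:ℝ)*q^(k-1)*|x.snd|)
          = r^k*q^k + ((k:ℝ)*(r^k*q^(k-1)))*|x.snd| := by ring
      rw [expand]
      have h24 : ((k:ℝ)*(r^k*q^(k-1)))*|x.snd| ≤ ((k:ℝ)*(2*r*ρ^k))*|x.snd| :=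
        mul_le_mul_of_nonneg_right hB2 (abs_nonneg _)
      have h25 : ρ^k + ((k:ℝ)*(2*r*ρ^k))*|x.snd| ≤ (1 + 2*r*|x.snd|) * (((k:ℝ)+1) * ρ^k) := by
        nlinarith [mul_nonneg hk0 hρk,
          mul_nonneg (mul_nonneg (le_of_lt hr0) (abs_nonneg x.snd)) hρk]
      linarith [hB1]
    calc u k = (((k:ℝ)+1) * ((m + k : ℕ) : ℝ)^m) *
          (r^k * (q^k + (k:ℝ)*q^(k-1)*|x.snd|)) := by
          simp only [hu_def, hW_def]; ring
      _ ≤ (((k:ℝ)+1) * ((((m+1:ℕ)):ℝ)^m * ((k:ℝ)+1)^m)) *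
          ((1 + 2*r*|x.snd|) * (((k:ℝ)+1) * ρ^k)) := by
          apply mul_le_mul
          · exact mul_le_mul_of_nonneg_left hA (by positivity)
          · exact hmain2
          · positivity
          · positivity
      _ = ((((m+1:ℕ)):ℝ)^m * (1 + 2*r*|x.snd|)) * (((k:ℝ)+1)^(m+2) * ρ^k) := by
          rw [pow_add]; ring
  have hU : Summable u := by
    refine Summable.of_nonneg_of_le hu0 hu_le ?_
    exact (summable_geom_aux (m+2) hρ0 hρ1).mul_left _
  -- the series and its termwise derivative
  set g : ℕ → ℝ → DualNumber ℝ := fun k t => t ^ k • dbc a x k with hg_def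
  set g' : ℕ → ℝ → DualNumber ℝ := fun k t => ((k:ℝ) * t ^ (k-1)) • dbc a x k with hg'_def
  set s : Set ℝ := Metric.ball (0:ℝ) r with hs_def
  have hs_open : IsOpen s := Metric.isOpen_ball
  have hs_conn : IsPreconnected s := (convex_ball (0:ℝ) r).isPreconnected
  have hmem : ∀ t ∈ s, |t| < r := by
    intro t ht
    rw [hs_def] at ht
    rwa [Metric.mem_ball, Real.dist_eq, sub_zero] at ht
  have h0s : (0:ℝ) ∈ s := by
    rw [hs_def]; exact Metric.mem_ball_self hr0
  have hIcc : Set.Icc (0:ℝ) 1 ⊆ s := by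
    intro t ht
    rw [hs_def, Metric.mem_ball, Real.dist_eq, sub_zero, abs_of_nonneg ht.1]
    linarith [ht.2]
  have hgderiv : ∀ k : ℕ, ∀ t ∈ s, HasDerivAt (g k) (g' k t) t := by
    intro k t _
    simpa only [hg_def, hg'_def] using (hasDerivAt_pow k t).smul_const (dbc a x k)
  have hg'le : ∀ k : ℕ, ∀ t ∈ s, ‖g' k t‖ ≤ u k := by
    intro k t ht
    have h1 : ‖g' k t‖ = |(k:ℝ) * t^(k-1)| * ‖dbc a x k‖ := by
      simp only [hg'_def]; rw [norm_smul, Real.norm_eq_abs]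
    rw [h1]
    have h2 : |(k:ℝ) * t^(k-1)| ≤ ((k:ℝ)+1) * r^k := by
      rw [abs_mul, Nat.abs_cast, abs_pow]
      have h3 : |t|^(k-1) ≤ r^(k-1) := pow_le_pow_left₀ (abs_nonneg t) (le_of_lt (hmem t ht)) _
      have h4 : r^(k-1) ≤ r^k := pow_le_pow_right₀ (le_of_lt hr1) (Nat.sub_le k 1)
      have h5 : (0:ℝ) ≤ (k:ℝ) := Nat.cast_nonneg k
      nlinarith [pow_nonneg (abs_nonneg t) (k-1), pow_nonneg (le_of_lt hr0) k]
    calc |(k:ℝ)*t^(k-1)| * ‖dbc a x k‖ ≤ (((k:ℝ)+1) * r^k) * W k :=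
          mul_le_mul h2 (hcW k) (norm_nonneg _) (by positivity)
      _ = u k := by simp only [hu_def]; try ring
  have hgle : ∀ k : ℕ, ∀ t ∈ s, ‖g k t‖ ≤ u k := by
    intro k t ht
    have h1 : ‖g k t‖ = |t|^k * ‖dbc a x k‖ := by
      simp only [hg_def]; rw [norm_smul, Real.norm_eq_abs, abs_pow]
    rw [h1]
    have h2 : |t|^k ≤ ((k:ℝ)+1) * r^k := by
      have h3 : |t|^k ≤ r^k := pow_le_pow_left₀ (abs_nonneg t) (le_of_lt (hmem t ht)) _
      have h5 : (0:ℝ) ≤ (k:ℝ) := Nat.cast_nonneg k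
      nlinarith [pow_nonneg (le_of_lt hr0) k]
    calc |t|^k * ‖dbc a x k‖ ≤ (((k:ℝ)+1) * r^k) * W k :=
          mul_le_mul h2 (hcW k) (norm_nonneg _) (by positivity)
      _ = u k := by simp only [hu_def]; try ring
  have hg0 : Summable (fun k => g k 0) := by
    apply summable_of_ne_finset_zero (s := {0})
    intro k hk
    have hk' : k ≠ 0 := by simpa using hk
    simp [hg_def, zero_pow hk']
  set f : ℝ → DualNumber ℝ := fun t => ∑' k, g k t with hf_def
  set S : ℝ → DualNumber ℝ := fun t => ∑' k, g' k t with hS_def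
  have hfderiv : ∀ t ∈ s, HasDerivAt f (S t) t := by
    intro t ht
    simp only [hf_def, hS_def]
    exact hasDerivAt_tsum_of_isPreconnected hU hs_open hs_conn hgderiv hg'le h0s hg0 ht
  have hfsum : ∀ t ∈ s, Summable (fun k => g k t) := by
    intro t ht
    exact Summable.of_norm (Summable.of_nonneg_of_le (fun k => norm_nonneg _)
      (fun k => hgle k t ht) hU)
  have hSsum : ∀ t ∈ s, Summable (fun k => g' k t) := by
    intro t ht
    exact Summable.of_norm (Summable.of_nonneg_of_le (fun k => norm_nonneg _)
      (fun k => hg'le k t ht) hU)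
  -- the differential equation for f
  have hODE : ∀ t ∈ s, (1 - t • x) * S t = a * x * f t := by
    intro t ht
    have h1 : HasSum (fun k => g' k t) (S t) := by
      simp only [hS_def]; exact (hSsum t ht).hasSum
    have h2 : HasSum (fun k => g k t) (f t) := by
      simp only [hf_def]; exact (hfsum t ht).hasSum
    have h3 : HasSum (fun k : ℕ => g' (k + 1) t) (S t) := by
      have h30 := (hasSum_nat_add_iff' (f := fun k => g' k t) 1).2 h1
      simpa [hg'_def] using h30
    have hterm : ∀ k : ℕ, g' (k + 1) t = a * x * g k t + ((k:ℝ) * t ^ k) • (x * dbc a x k) := by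
      intro k
      have hk1 : ((k:ℝ) + 1) ≠ 0 := by positivity
      simp only [hg'_def, hg_def, Nat.add_sub_cancel, dbc_succ, smul_smul]
      push_cast
      rw [show ((k:ℝ) + 1) * t ^ k * ((k:ℝ) + 1)⁻¹ = t ^ k by field_simp]
      rw [add_mul, add_mul, smul_add]
      congr 1
      · rw [mul_smul_comm]
      · rw [mul_assoc, ← nsmul_eq_mul, ← Nat.cast_smul_eq_nsmul ℝ, smul_smul]
        congr 1
        ring
    have h4 : HasSum (fun k : ℕ => a * x * g k t + ((k:ℝ) * t ^ k) • (x * dbc a x k)) (S t) :=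
      funext hterm ▸ h3
    have h5 : HasSum (fun k => a * x * g k t) (a * x * f t) := h2.mul_left _
    have h6 : HasSum (fun k : ℕ => ((k:ℝ) * t ^ k) • (x * dbc a x k)) (t • (x * S t)) := by
      have h60 := (h1.mul_left x).const_smul t
      have heq : (fun k : ℕ => t • (x * g' k t))
          = fun k : ℕ => ((k:ℝ) * t ^ k) • (x * dbc a x k) := by
        funext k
        simp only [hg'_def, mul_smul_comm, smul_smul]
        rcases Nat.eq_zero_or_pos k with rfl | hk
        · simp
        · congr 1
          rw [mul_comm t, mul_assoc, ← pow_succ, Nat.sub_add_cancel hk]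
      exact heq ▸ h60
    have h8 : S t = a * x * f t + t • (x * S t) := h4.unique (h5.add h6)
    calc (1 - t • x) * S t = S t - t • (x * S t) := by
          rw [sub_mul, one_mul, smul_mul_assoc]
      _ = a * x * f t := by
          nth_rewrite 1 [h8]; exact add_sub_cancel_right _ _
  -- the dual power function and its differential equation
  have hpos : ∀ t ∈ s, 0 < 1 - t * x.fst := by
    intro t ht
    have h1 : |t * x.fst| < 1 := by
      rw [abs_mul]
      calc |t| * |x.fst| ≤ r * q :=
            mul_le_mul (le_of_lt (hmem t ht)) le_rfl hq0 (le_of_lt hr0)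
        _ < 1 := hrq
    have h2 := abs_lt.mp h1
    linarith [h2.1, h2.2]
  set P : ℝ → ℝ := fun t => (1 - t * x.fst) ^ a.fst with hP_def
  set A2 : ℝ → ℝ := fun t => a.snd * Real.log (1 - t * x.fst)
      + a.fst * (-(t * x.snd)) / (1 - t * x.fst) with hA2_def
  set H : ℝ → DualNumber ℝ := fun t => dualPow (1 - t • x) a with hH_def
  have hfst1 : ∀ t : ℝ, (1 - t • x).fst = 1 - t * x.fst := by
    intro t; rw [fst_sub, fst_one, fst_smul, smul_eq_mul]
  have hsnd1 : ∀ t : ℝ, (1 - t • x).snd = -(t * x.snd) := by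
    intro t; rw [snd_sub, snd_one, snd_smul, smul_eq_mul, zero_sub]
  have hHeq : ∀ t : ℝ, H t = P t • (1 : DualNumber ℝ) + (P t * A2 t) • ε := by
    intro t
    simp only [hH_def, hP_def, hA2_def]
    rw [dualPow_eq, hfst1, hsnd1]
  have hHkey : ∀ t ∈ s, ∃ H', HasDerivAt H H' t ∧ (1 - t • x) * H' = -(a * x) * H t := by
    intro t ht
    have hd := hpos t ht
    have hlin : HasDerivAt (fun t : ℝ => 1 - t * x.fst) (-x.fst) t := by
      simpa using (HasDerivAt.const_sub 1 ((hasDerivAt_id t).mul_const x.fst))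
    have hP' : HasDerivAt P (a.fst * (1 - t * x.fst) ^ (a.fst - 1) * (-x.fst)) t := by
      rw [hP_def]
      have h := hlin.rpow_const (p := a.fst) (Or.inl hd.ne')
      convert h using 1
      ring
    have hL : HasDerivAt (fun t : ℝ => Real.log (1 - t * x.fst)) (-x.fst / (1 - t * x.fst)) t :=
      hlin.log hd.ne'
    have hN : HasDerivAt (fun t : ℝ => a.fst * (-(t * x.snd))) (a.fst * (-x.snd)) t := by
      simpa using (HasDerivAt.const_mul a.fst (((hasDerivAt_id t).mul_const x.snd).neg))
    have hB : HasDerivAt (fun t : ℝ => a.fst * (-(t * x.snd)) / (1 - t * x.fst))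
        ((a.fst * (-x.snd) * (1 - t * x.fst) - a.fst * (-(t * x.snd)) * (-x.fst))
          / (1 - t * x.fst) ^ 2) t :=
      hN.div hlin hd.ne'
    have hA2' : HasDerivAt A2 (a.snd * (-x.fst / (1 - t * x.fst)) +
        (a.fst * (-x.snd) * (1 - t * x.fst) - a.fst * (-(t * x.snd)) * (-x.fst))
          / (1 - t * x.fst) ^ 2) t := by
      rw [hA2_def]; exact (hL.const_mul a.snd).add hB
    set P' : ℝ := a.fst * (1 - t * x.fst) ^ (a.fst - 1) * (-x.fst) with hP'_def
    set A2v : ℝ := a.snd * (-x.fst / (1 - t * x.fst)) +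
        (a.fst * (-x.snd) * (1 - t * x.fst) - a.fst * (-(t * x.snd)) * (-x.fst))
          / (1 - t * x.fst) ^ 2 with hA2v_def
    set Q' : ℝ := P' * A2 t + P t * A2v with hQ'_def
    refine ⟨P' • (1 : DualNumber ℝ) + Q' • ε, ?_, ?_⟩
    · have hQd : HasDerivAt (fun t => P t * A2 t) Q' t := hP'.mul hA2'
      have hcomb := (hP'.smul_const (1 : DualNumber ℝ)).add (hQd.smul_const ε)
      exact hcomb.congr_of_eventuallyEq (Filter.Eventually.of_forall hHeq)
    · have hE : (1 - t * x.fst) ^ a.fst = (1 - t * x.fst) ^ (a.fst - 1) * (1 - t * x.fst) := by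
        rw [← Real.rpow_add_one hd.ne', sub_add_cancel]
      rw [hHeq t]
      ext
      · simp only [fst_mul, snd_mul, fst_add, snd_add, fst_smul, snd_smul, fst_one, snd_one,
          DualNumber.fst_eps, DualNumber.snd_eps, fst_neg, snd_neg, fst_sub, snd_sub,
          smul_eq_mul, op_smul_eq_smul, hfst1, hsnd1]
        simp only [hP_def, hP'_def]
        rw [hE]
        ring
      · simp only [fst_mul, snd_mul, fst_add, snd_add, fst_smul, snd_smul, fst_one, snd_one,
          DualNumber.fst_eps, DualNumber.snd_eps, fst_neg, snd_neg, fst_sub, snd_sub,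
          smul_eq_mul, op_smul_eq_smul, hfst1, hsnd1]
        simp only [hQ'_def, hP'_def, hA2v_def, hP_def, hA2_def]
        rw [hE]
        field_simp
        ring
  -- the product is constant
  have hGderiv : ∀ t ∈ s, HasDerivAt (fun t => f t * H t) 0 t := by
    intro t ht
    obtain ⟨H', hH'd, hH'eq⟩ := hHkey t ht
    have hFH := (hfderiv t ht).mul hH'd
    have hzero : S t * H t + f t * H' = 0 := by
      have hunit : IsUnit (1 - t • x) := by
        rw [isUnit_iff_isUnit_fst, hfst1]
        exact isUnit_iff_ne_zero.2 (hpos t ht).ne'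
      refine (hunit.mul_right_eq_zero).mp ?_
      calc (1 - t • x) * (S t * H t + f t * H')
          = ((1 - t • x) * S t) * H t + f t * ((1 - t • x) * H') := by ring
        _ = (a * x * f t) * H t + f t * (-(a * x) * H t) := by rw [hODE t ht, hH'eq]
        _ = 0 := by ring
    rwa [hzero] at hFH
  have hcont : ContinuousOn (fun t => f t * H t) (Set.Icc 0 1) := fun t ht =>
    ((hGderiv t (hIcc ht)).continuousAt).continuousWithinAt
  have hderiv01 : ∀ t ∈ Set.Ico (0:ℝ) 1,
      HasDerivWithinAt (fun t => f t * H t) 0 (Set.Ici t) t := fun t ht =>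
    (hGderiv t (hIcc ⟨ht.1, le_of_lt ht.2⟩)).hasDerivWithinAt
  have hconst := constant_of_has_deriv_right_zero hcont hderiv01 1
    (Set.right_mem_Icc.2 zero_le_one)
  -- evaluation at the endpoints
  have hf0 : f 0 = 1 := by
    simp only [hf_def]
    rw [tsum_eq_single 0 ?_]
    · simp [hg_def, dbc_zero]
    · intro k hk
      simp [hg_def, zero_pow hk]
  have hH0 : H 0 = 1 := by
    simp only [hH_def]
    rw [zero_smul, sub_zero]
    exact dualPow_one_left a
  have hmain : f 1 * H 1 = 1 := by
    have := hconst
    rw [this, hf0, hH0, one_mul]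
  have hH1 : H 1 = dualPow (1 - x) a := by
    simp only [hH_def, one_smul]
  have hw1 : 0 < (1 - x).fst := by
    rw [fst_sub, fst_one]
    have h2 := abs_lt.mp hx
    linarith [h2.2]
  have hinv := dualPow_neg_mul (1 - x) a hw1
  have hLHS : (∑' k : ℕ, (k.factorial : ℝ)⁻¹ • (dualPoch a k * x ^ k)) = f 1 := by
    simp only [hf_def]
    refine tsum_congr fun k => ?_
    simp [hg_def, dbc]
  rw [hLHS]
  calc f 1 = f 1 * (dualPow (1 - x) (-a) * dualPow (1 - x) a) := by rw [hinv, mul_one]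
    _ = (f 1 * dualPow (1 - x) a) * dualPow (1 - x) (-a) := by ring
    _ = dualPow (1 - x) (-a) := by rw [← hH1, hmain, one_mul]
end

section
/- (Dual Euler transformation.) Let â₁, â₂, b̂ be real dual numbers with the real part of b̂ not equal to 0, −1, −2, …, and let x̂ = x₁ + ε x₂ with |x₁| < 1. Then ₂F₁(â₁, â₂; b̂; x̂) = (1 − x̂)^{b̂ − â₁ − â₂} · ₂F₁(b̂ − â₁, b̂ − â₂; b̂; x̂), where (1 − x̂)^{b̂ − â₁ − â₂} is the dual power (valid since 1 − x₁ > 0). -/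
open TrivSqZeroExt
open scoped DualNumber

/-- The dual Gauss hypergeometric function `₂F₁(â₁, â₂; b̂; x̂)`. -/
noncomputable def dualGaussHyper (a₁ a₂ b x : DualNumber ℝ) : DualNumber ℝ :=
  ∑' k : ℕ, (k.factorial : ℝ)⁻¹ •
    (dualPoch a₁ k * dualPoch a₂ k * Ring.inverse (dualPoch b k) * x ^ k)

open Filter Finset

noncomputable section DualEulerAux

local notation "K" => DualNumber ℝ

lemma dsnd_mul (u v : K) : (u*v).snd = u.fst * v.snd + v.fst * u.snd := by
  rw [TrivSqZeroExt.snd_mul]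
  simp [MulOpposite.smul_eq_mul_unop, mul_comm]

lemma dfst_pow (u : K) (k : ℕ) : (u^k).fst = u.fst ^ k := by
  induction k with
  | zero => simp
  | succ n ih => rw [pow_succ, pow_succ, fst_mul, ih]

lemma dsnd_pow (u : K) (k : ℕ) : (u^k).snd = k * u.fst ^ (k-1) * u.snd := by
  induction k with
  | zero => simp
  | succ n ih =>
    rw [pow_succ, dsnd_mul, ih, dfst_pow]
    rcases Nat.eq_zero_or_pos n with h | h
    · subst h; simp
    · have hn : n - 1 + 1 = n := Nat.succ_pred_eq_of_pos h
      rw [show n + 1 - 1 = n from rfl]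
      push_cast
      rw [← hn, pow_succ]
      push_cast
      ring

/-- explicit inverse of a dual number with nonzero real part -/
def dInv (u : K) : K := ⟨u.fst⁻¹, -(u.fst⁻¹ * u.snd * u.fst⁻¹)⟩

lemma dInv_fst (u : K) : (dInv u).fst = u.fst⁻¹ := rfl
lemma dInv_snd (u : K) : (dInv u).snd = -(u.fst⁻¹ * u.snd * u.fst⁻¹) := rfl

lemma mul_dInv (u : K) (hu : u.fst ≠ 0) : u * dInv u = 1 := by
  ext
  · show (u * dInv u).fst = 1
    rw [fst_mul, dInv_fst, mul_inv_cancel₀ hu]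
  · show (u * dInv u).snd = 0
    rw [dsnd_mul, dInv_fst, dInv_snd]
    show u.fst * -(u.fst⁻¹ * u.snd * u.fst⁻¹) + u.fst⁻¹ * u.snd = 0
    field_simp
    ring

/-- the unit -/
def dUnit (u : K) (hu : u.fst ≠ 0) : Kˣ :=
  ⟨u, dInv u, mul_dInv u hu, by rw [mul_comm]; exact mul_dInv u hu⟩

lemma isUnit_of_fst_ne_zero (u : K) (hu : u.fst ≠ 0) : IsUnit u := ⟨dUnit u hu, rfl⟩

lemma ringInverse_eq_dInv (u : K) (hu : u.fst ≠ 0) : Ring.inverse u = dInv u := by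
  have : u = (dUnit u hu : Kˣ) := rfl
  rw [this, Ring.inverse_unit]; rfl

lemma mul_ringInverse_self (u : K) (hu : u.fst ≠ 0) : u * Ring.inverse u = 1 := by
  rw [ringInverse_eq_dInv u hu]; exact mul_dInv u hu

lemma dnat_eq_inl (n : ℕ) : ((n:ℕ):K) = inl (n:ℝ) := (inl_natCast n).symm

lemma dnatCast_fst (n : ℕ) : ((n:K)).fst = (n:ℝ) := by rw [← inl_natCast, fst_inl]

lemma dnatCast_snd (n : ℕ) : ((n:K)).snd = 0 := by rw [← inl_natCast, snd_inl]

lemma dsmul_eq_inl_mul (r : ℝ) (z : K) : r • z = inl r * z := by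
  ext
  · rw [fst_mul, fst_inl, fst_smul]; rfl
  · rw [dsnd_mul, fst_inl, snd_inl, snd_smul]; ring_nf

lemma dualPoch_fst (a : K) (k : ℕ) :
    (dualPoch a k).fst = ∏ i ∈ Finset.range k, (a.fst + i) := by
  induction k with
  | zero => simp [dualPoch]
  | succ m ih =>
    rw [dualPoch, fst_mul, ih, Finset.prod_range_succ, fst_add, dnatCast_fst]

lemma dualPoch_fst_ne_zero (b : K) (hb : ∀ n : ℕ, b.fst ≠ -n) (k : ℕ) :
    (dualPoch b k).fst ≠ 0 := by
  rw [dualPoch_fst]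
  apply Finset.prod_ne_zero_iff.2
  intro i _ h
  exact hb i (by linarith [h])

lemma dualPoch_isUnit (b : K) (hb : ∀ n : ℕ, b.fst ≠ -n) (k : ℕ) :
    IsUnit (dualPoch b k) :=
  isUnit_of_fst_ne_zero _ (dualPoch_fst_ne_zero b hb k)

lemma shift_fst_ne_zero (b : K) (hb : ∀ n : ℕ, b.fst ≠ -n) (k : ℕ) :
    (b + (k:K)).fst ≠ 0 := by
  rw [fst_add, dnatCast_fst]
  intro h
  exact hb k (by linarith)

lemma shift_isUnit (b : K) (hb : ∀ n : ℕ, b.fst ≠ -n) (k : ℕ) : IsUnit (b + (k:K)) :=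
  isUnit_of_fst_ne_zero _ (shift_fst_ne_zero b hb k)

lemma mul_ringInverse_shift (b : K) (hb : ∀ n : ℕ, b.fst ≠ -n) (k : ℕ) :
    (b + (k:K)) * Ring.inverse (b + (k:K)) = 1 :=
  mul_ringInverse_self _ (shift_fst_ne_zero b hb k)

/-- the coefficient sequences -/
def hypCoeff (p q b : K) (k : ℕ) : K :=
  inl ((k.factorial : ℝ)⁻¹) * (dualPoch p k * dualPoch q k * Ring.inverse (dualPoch b k))

def binCoeff (g : K) (k : ℕ) : K := inl ((k.factorial : ℝ)⁻¹) * dualPoch g k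

lemma binCoeff_zero (g : K) : binCoeff g 0 = 1 := by
  simp [binCoeff, dualPoch]

lemma hypCoeff_zero (p q b : K) : hypCoeff p q b 0 = 1 := by
  simp [hypCoeff, dualPoch, Ring.inverse_one]

lemma inl_fac_succ (k : ℕ) :
    inl (((k+1).factorial : ℝ)⁻¹) = (inl ((k.factorial:ℝ)⁻¹) * inl (((k:ℝ)+1)⁻¹) : K) := by
  rw [inl_mul_inl]
  congr 1
  rw [Nat.factorial_succ]
  push_cast
  rw [mul_inv]
  ring

lemma inl_nat_mul_fac_succ (k : ℕ) :
    ((k+1:ℕ):K) * inl (((k+1).factorial : ℝ)⁻¹) = inl ((k.factorial:ℝ)⁻¹) := by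
  rw [dnat_eq_inl, inl_fac_succ, ← mul_assoc, inl_mul_inl, inl_mul_inl]
  congr 1
  push_cast
  rw [mul_comm ((k:ℝ)+1)]
  rw [mul_assoc, mul_inv_cancel₀ (by positivity : ((k:ℝ)+1) ≠ 0), mul_one]

lemma binCoeff_rec (g : K) (k : ℕ) :
    binCoeff g (k+1) = binCoeff g k * (inl (((k:ℝ)+1)⁻¹) * (g + (k:K))) := by
  rw [binCoeff, binCoeff, dualPoch, inl_fac_succ]
  ring

lemma binCoeff_rec' (g : K) (k : ℕ) :
    ((k+1 : ℕ):K) * binCoeff g (k+1) = (g + (k:K)) * binCoeff g k := by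
  rw [binCoeff, binCoeff, dualPoch, ← mul_assoc, inl_nat_mul_fac_succ]
  ring

lemma hypCoeff_rec (p q b : K) (hb : ∀ n : ℕ, b.fst ≠ -n) (k : ℕ) :
    hypCoeff p q b (k+1) = hypCoeff p q b k *
      (inl (((k:ℝ)+1)⁻¹) * ((p + (k:K)) * (q + (k:K)) * Ring.inverse (b + (k:K)))) := by
  rw [hypCoeff, hypCoeff, dualPoch, dualPoch, dualPoch, Ring.mul_inverse_rev, inl_fac_succ]
  ring

lemma hypCoeff_rec' (p q b : K) (hb : ∀ n : ℕ, b.fst ≠ -n) (k : ℕ) :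
    ((k+1 : ℕ):K) * ((b + (k:K)) * hypCoeff p q b (k+1)) =
      (p + (k:K)) * (q + (k:K)) * hypCoeff p q b k := by
  rw [hypCoeff, hypCoeff, dualPoch, dualPoch, dualPoch, Ring.mul_inverse_rev]
  have h3 := mul_ringInverse_shift b hb k
  have hfac := inl_nat_mul_fac_succ k
  linear_combination ((b+(k:K))*Ring.inverse (b+(k:K))*dualPoch p k*(p+(k:K))*dualPoch q k
      *(q+(k:K))*Ring.inverse (dualPoch b k)) * hfac
    + (inl ((k.factorial:ℝ)⁻¹)*dualPoch p k*(p+(k:K))*dualPoch q k*(q+(k:K))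
      *Ring.inverse (dualPoch b k)) * h3

end DualEulerAux

section StepC
set_option maxHeartbeats 1000000
open PowerSeries
local notation "K" => DualNumber ℝ

lemma coeffXmul (S : (PowerSeries K)) (n : ℕ) :
    coeff n (X*S) = if n = 0 then 0 else coeff (n-1) S := by
  cases n with
  | zero => simp [coeff_zero_X_mul]
  | succ m => simp [coeff_succ_X_mul]

/-- coefficient extraction for the hypergeometric ODE expression -/
lemma ode_coeff (Y : PowerSeries K) (b' w m : K) (n : ℕ) :
    coeff n (X*(1-X)*(d⁄dX K (d⁄dX K Y)) + (C b' - C w * X) * (d⁄dX K Y) - C m * Y)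
      = ((n:K)+1)*(b' + (n:K))*(coeff (n+1) Y)
        - (((n:K)-1)*(n:K) + w*(n:K) + m)*(coeff n Y) := by
  have hsplit : X*(1-X)*(d⁄dX K (d⁄dX K Y)) + (C b' - C w * X) * (d⁄dX K Y) - C m * Y
      = X*(d⁄dX K (d⁄dX K Y)) - X*(X*(d⁄dX K (d⁄dX K Y)))
        + (C b' * (d⁄dX K Y) - C w * (X * (d⁄dX K Y))) - C m * Y := by ring
  rw [hsplit]
  simp only [map_sub, map_add, coeffXmul, coeff_C_mul, coeff_derivative]
  match n with
  | 0 => norm_num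
  | 1 => norm_num; push_cast; ring
  | (l+2) =>
    have h1 : l+2 ≠ 0 := by omega
    have h2 : l+2-1 = l+1 := by omega
    have h3 : l+1 ≠ 0 := by omega
    have h4 : l+1-1 = l := by omega
    simp only [h1, h2, h3, h4, if_false]
    push_cast
    ring

lemma cauchy_coeff_eq (a₁ a₂ b : K) (hb : ∀ n : ℕ, b.fst ≠ -n) (n : ℕ) :
    ∑ pq ∈ Finset.HasAntidiagonal.antidiagonal n,
        binCoeff (a₁+a₂-b) pq.1 * hypCoeff (b-a₁) (b-a₂) b pq.2
      = hypCoeff a₁ a₂ b n := by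
  set g : K := a₁+a₂-b with hgdef
  set u : K := b-a₁ with hudef
  set v : K := b-a₂ with hvdef
  set Bs : PowerSeries K := PowerSeries.mk (binCoeff g) with hBs
  set Fs : PowerSeries K := PowerSeries.mk (hypCoeff u v b) with hFs
  -- first order relation for Bs
  have hB : (1 - X) * (d⁄dX K Bs) = C g * Bs := by
    refine PowerSeries.ext fun j => ?_
    rw [sub_mul, one_mul, map_sub, coeff_C_mul, coeffXmul]
    cases j with
    | zero =>
      simp only [if_true, eq_self_iff_true, reduceIte]
      rw [coeff_derivative, hBs, coeff_mk, coeff_mk]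
      have h0 := binCoeff_rec' g 0
      push_cast at h0 ⊢
      linear_combination h0
    | succ m =>
      have h1 : m+1 ≠ 0 := by omega
      simp only [h1, if_false]
      rw [coeff_derivative, coeff_derivative, hBs, coeff_mk, coeff_mk, coeff_mk]
      have ha := binCoeff_rec' g (m+1)
      push_cast at ha ⊢
      linear_combination ha
  have hB2 : (1 - X) * (d⁄dX K (d⁄dX K Bs)) = (C g + 1) * (d⁄dX K Bs) := by
    have hd := congrArg (fun t => d⁄dX K t) hB
    simp only [Derivation.leibniz, smul_eq_mul, map_sub, derivative_X,
      Derivation.map_one_eq_zero, derivative_C] at hd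
    linear_combination hd
  -- ODE for Fs
  have hF : X*(1-X)*(d⁄dX K (d⁄dX K Fs)) + (C b - C (u+v+1) * X) * (d⁄dX K Fs)
      - C (u*v) * Fs = 0 := by
    refine PowerSeries.ext fun j => ?_
    rw [ode_coeff, map_zero, hFs, coeff_mk, coeff_mk]
    have hr := hypCoeff_rec' u v b hb j
    push_cast at hr ⊢
    linear_combination hr
  -- ODE for the product
  set G : PowerSeries K := Bs * Fs with hG
  have hDG : d⁄dX K G = Bs * (d⁄dX K Fs) + Fs * (d⁄dX K Bs) := by
    rw [hG, Derivation.leibniz, smul_eq_mul, smul_eq_mul]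
  have hDDG : d⁄dX K (d⁄dX K G) = Bs * (d⁄dX K (d⁄dX K Fs)) + 2*((d⁄dX K Bs) * (d⁄dX K Fs))
      + Fs * (d⁄dX K (d⁄dX K Bs)) := by
    rw [hDG, map_add, Derivation.leibniz, Derivation.leibniz, smul_eq_mul, smul_eq_mul,
      smul_eq_mul, smul_eq_mul]
    ring
  have key : (1-X) * (X*(1-X)*(d⁄dX K (d⁄dX K G)) + (C b - C (a₁+a₂+1) * X) * (d⁄dX K G)
      - C (a₁*a₂) * G) = 0 := by
    rw [hDDG, hDG, hG]
    simp only [hgdef, hudef, hvdef, map_add, map_sub, map_mul, map_one] at hB hB2 hF ⊢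
    linear_combination (X*(1-X)*Fs) * hB2
      + (2*X*(1-X)*(d⁄dX K Fs) + (C b - (C a₁ + C a₂ + 1) * X)*Fs
          + X*((C a₁ + C a₂ - C b) + 1)*Fs) * hB
      + ((1-X)*Bs) * hF
  have hunitX : IsUnit (1 - X : PowerSeries K) := by
    rw [PowerSeries.isUnit_iff_constantCoeff, map_sub, map_one, constantCoeff_X, sub_zero]
    exact isUnit_one
  have hODE : X*(1-X)*(d⁄dX K (d⁄dX K G)) + (C b - C (a₁+a₂+1) * X) * (d⁄dX K G)
      - C (a₁*a₂) * G = 0 := by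
    exact hunitX.mul_left_cancel (key.trans (mul_zero ((1:PowerSeries K)-X)).symm)
  -- recurrence for coefficients of G
  have hGrec : ∀ m : ℕ, ((m:K)+1)*(b+(m:K))*(coeff (m+1) G)
      = ((m:K)+a₁)*((m:K)+a₂)*(coeff m G) := by
    intro m
    have := congrArg (fun t => coeff m t) hODE
    rw [ode_coeff] at this
    simp only [map_zero] at this
    linear_combination this
  -- induction
  have main : ∀ m : ℕ, coeff m G = hypCoeff a₁ a₂ b m := by
    intro m
    induction m with
    | zero =>
      rw [hG, coeff_mul]
      rw [Finset.Nat.antidiagonal_zero, Finset.sum_singleton]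
      rw [hBs, hFs, coeff_mk, coeff_mk, binCoeff_zero, hypCoeff_zero, hypCoeff_zero, one_mul]
    | succ m ih =>
      have h1 := hGrec m
      rw [ih] at h1
      have h2 := hypCoeff_rec' a₁ a₂ b hb m
      have hunit : IsUnit (((m:K)+1)*(b+(m:K))) := by
        refine IsUnit.mul ?_ (shift_isUnit b hb m)
        apply isUnit_of_fst_ne_zero
        rw [fst_add, dnatCast_fst, fst_one]
        positivity
      refine hunit.mul_left_cancel ?_
      push_cast at h2
      linear_combination h1 - h2
  rw [← main n, hG, coeff_mul, hBs, hFs]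
  simp only [coeff_mk]

end StepC

section RealBinomial
open Finset

/-- real Pochhammer -/
def rpoch (t : ℝ) (k : ℕ) : ℝ := ∏ i ∈ Finset.range k, (t + i)

/-- derivative of rpoch in t -/
def rpochD (t : ℝ) : ℕ → ℝ
  | 0 => 0
  | k+1 => rpoch t k + rpochD t k * (t + k)

lemma rpoch_zero (t : ℝ) : rpoch t 0 = 1 := by simp [rpoch]

lemma rpoch_succ (t : ℝ) (k : ℕ) : rpoch t (k+1) = rpoch t k * (t + k) := by
  rw [rpoch, rpoch, Finset.prod_range_succ]

lemma hasDerivAt_rpoch (k : ℕ) (t : ℝ) :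
    HasDerivAt (fun s => rpoch s k) (rpochD t k) t := by
  induction k with
  | zero =>
    simp only [rpoch_zero, rpochD]
    exact hasDerivAt_const t 1
  | succ m ih =>
    have h2 : HasDerivAt (fun s : ℝ => s + m) 1 t := by
      simpa using (hasDerivAt_id t).add_const (m:ℝ)
    have := ih.mul h2
    simp only [rpochD, mul_one]
    have e : (fun s => rpoch s (m+1)) = ((fun s => rpoch s m) * fun s => s + (m:ℝ)) := by
      funext s; rw [rpoch_succ]; rfl
    rw [e]
    exact this.congr_deriv (by ring)

lemma rpoch_nonneg (M : ℝ) (hM : 0 ≤ M) (k : ℕ) : 0 ≤ rpoch M k := by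
  apply Finset.prod_nonneg
  intro i _
  positivity

lemma rpoch_abs_le (t M : ℝ) (hM : |t| ≤ M) (k : ℕ) : |rpoch t k| ≤ rpoch M k := by
  rw [rpoch, Finset.abs_prod, rpoch]
  apply Finset.prod_le_prod
  · intro i _; positivity
  · intro i _
    calc |t + (i:ℝ)| ≤ |t| + i := by
          refine (abs_add_le _ _).trans ?_
          simp
      _ ≤ M + i := by linarith

lemma rpoch_mono (M : ℝ) (hM : 0 ≤ M) {M' : ℝ} (h : M ≤ M') (k : ℕ) :
    rpoch M k ≤ rpoch M' k := by
  apply Finset.prod_le_prod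
  · intro i _; positivity
  · intro i _; linarith

lemma rpochD_abs_le (t M : ℝ) (hM : |t| ≤ M) (hM1 : 1 ≤ M) (k : ℕ) :
    |rpochD t k| ≤ k * rpoch M k := by
  induction k with
  | zero => simp [rpochD]
  | succ m ih =>
    have h0 : 0 ≤ M := le_trans zero_le_one hM1
    have h1 : |rpochD t (m+1)| ≤ |rpoch t m| + |rpochD t m| * |t + m| := by
      rw [rpochD]
      refine (abs_add_le _ _).trans ?_
      rw [abs_mul]
    have h2 : |t + (m:ℝ)| ≤ M + m := by
      refine (abs_add_le _ _).trans ?_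
      simp only [Nat.abs_cast]
      linarith
    have h3 : (0:ℝ) ≤ rpoch M m := rpoch_nonneg M h0 m
    have h4 : |rpoch t m| ≤ rpoch M m := rpoch_abs_le t M hM m
    rw [rpoch_succ]
    push_cast
    nlinarith [abs_nonneg (rpochD t m), abs_nonneg (t + (m:ℝ))]

lemma rpoch_nat_le (M : ℕ) (k : ℕ) :
    rpoch (M:ℝ) k ≤ (k.factorial : ℝ) * ((k:ℝ)+1)^M := by
  induction k with
  | zero => simp [rpoch_zero]
  | succ m ih =>
    rw [rpoch_succ]
    have hfac : ((m+1).factorial : ℝ) = (m.factorial : ℝ) * ((m:ℝ)+1) := by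
      rw [Nat.factorial_succ]; push_cast; ring
    have key : ((m:ℝ)+1)^M * ((M:ℝ) + m) ≤ ((m:ℝ)+1) * ((m:ℝ)+2)^M := by
      have ha : (-2:ℝ) ≤ 1/((m:ℝ)+1) := by
        have : (0:ℝ) ≤ 1/((m:ℝ)+1) := by positivity
        linarith
      have hb : (1:ℝ) + (M:ℝ) * (1/((m:ℝ)+1)) ≤ (1 + 1/((m:ℝ)+1))^M :=
        one_add_mul_le_pow ha M
      have hm1 : (0:ℝ) < (m:ℝ)+1 := by positivity
      have h2 : ((m:ℝ)+1) * (1 + 1/((m:ℝ)+1)) = (m:ℝ)+2 := by field_simp; ring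
      have h3 : ((m:ℝ)+2)^M = ((m:ℝ)+1)^M * (1 + 1/((m:ℝ)+1))^M := by
        rw [← mul_pow, h2]
      rw [h3]
      have h4 : ((m:ℝ)+1)^M * (1 + (M:ℝ)/((m:ℝ)+1)) ≤ ((m:ℝ)+1)^M * (1 + 1/((m:ℝ)+1))^M := by
        have := hb
        rw [mul_one_div] at this
        exact mul_le_mul_of_nonneg_left this (by positivity)
      have h5 : ((m:ℝ)+1) * (((m:ℝ)+1)^M * (1 + (M:ℝ)/((m:ℝ)+1))) = ((m:ℝ)+1)^M * (((m:ℝ)+1) + M) := by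
        field_simp
      calc ((m:ℝ)+1)^M * ((M:ℝ) + m) ≤ ((m:ℝ)+1)^M * (((m:ℝ)+1) + M) := by
            apply mul_le_mul_of_nonneg_left (by linarith) (by positivity)
        _ = ((m:ℝ)+1) * (((m:ℝ)+1)^M * (1 + (M:ℝ)/((m:ℝ)+1))) := by rw [h5]
        _ ≤ ((m:ℝ)+1) * (((m:ℝ)+1)^M * (1 + 1/((m:ℝ)+1))^M) := by
            apply mul_le_mul_of_nonneg_left h4 (by positivity)
    have hMm : (0:ℝ) ≤ (M:ℝ) + m := by positivity
    have hpoch : rpoch (M:ℝ) m * ((M:ℝ)+m) ≤ ((m.factorial:ℝ) * ((m:ℝ)+1)^M) * ((M:ℝ)+m) :=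
      mul_le_mul_of_nonneg_right ih hMm
    push_cast
    calc rpoch (M:ℝ) m * ((M:ℝ)+m) ≤ (m.factorial:ℝ) * (((m:ℝ)+1)^M * ((M:ℝ)+m)) := by
          rw [← mul_assoc]; exact hpoch
      _ ≤ (m.factorial:ℝ) * (((m:ℝ)+1) * ((m:ℝ)+2)^M) := by
          apply mul_le_mul_of_nonneg_left key (by positivity)
      _ = ((m.factorial:ℝ) * ((m:ℝ)+1)) * ((m:ℝ)+1+1)^M := by ring
      _ = ((m+1).factorial:ℝ) * ((m:ℝ)+1+1)^M := by rw [hfac]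

lemma summable_poly_geom (M : ℕ) {r : ℝ} (hr : |r| < 1) :
    Summable (fun k : ℕ => ((k:ℝ)+1)^M * r^k) := by
  have hs : ∀ i : ℕ, Summable (fun k : ℕ => ((k:ℝ)^i * r^k) * (M.choose i : ℝ)) := by
    intro i
    exact (summable_pow_mul_geometric_of_norm_lt_one (R := ℝ) i (by rwa [Real.norm_eq_abs])).mul_right _
  have htot : Summable (fun k : ℕ => ∑ i ∈ Finset.range (M+1), ((k:ℝ)^i * r^k) * (M.choose i : ℝ)) :=
    summable_sum (fun i _ => hs i)
  refine htot.congr fun k => ?_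
  rw [add_pow]
  rw [Finset.sum_mul]
  apply Finset.sum_congr rfl
  intro i _
  ring

end RealBinomial

section BinomialSeries
open Filter Set

lemma exists_M (c : ℝ) : ∃ M : ℕ, 1 ≤ (M:ℝ) ∧ c ≤ (M:ℝ) := by
  refine ⟨max 1 ⌈c⌉₊, ?_, ?_⟩
  · have : (1:ℕ) ≤ max 1 ⌈c⌉₊ := le_max_left _ _
    exact_mod_cast this
  · calc c ≤ (⌈c⌉₊ : ℝ) := Nat.le_ceil c
      _ ≤ ((max 1 ⌈c⌉₊ : ℕ) : ℝ) := by exact_mod_cast le_max_right _ _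

lemma term_bound (t : ℝ) (M : ℕ) (hM : |t| ≤ (M:ℝ)) (k : ℕ) :
    |rpoch t k| / k.factorial ≤ ((k:ℝ)+1)^M := by
  have h1 : |rpoch t k| ≤ rpoch (M:ℝ) k := rpoch_abs_le t M hM k
  have h2 : rpoch (M:ℝ) k ≤ (k.factorial:ℝ) * ((k:ℝ)+1)^M := rpoch_nat_le M k
  have h3 : (0:ℝ) < k.factorial := by exact_mod_cast Nat.factorial_pos k
  rw [div_le_iff₀ h3]
  calc |rpoch t k| ≤ (k.factorial:ℝ) * ((k:ℝ)+1)^M := le_trans h1 h2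
    _ = ((k:ℝ)+1)^M * k.factorial := by ring

lemma summable_term (t z : ℝ) (hz : |z| < 1) :
    Summable (fun k => rpoch t k / k.factorial * z^k) := by
  obtain ⟨M, hM1, hM⟩ := exists_M |t|
  refine Summable.of_norm_bounded
    (summable_poly_geom M (r := |z|) (by rwa [abs_abs])) (fun k => ?_)
  rw [Real.norm_eq_abs, abs_mul, abs_div, abs_pow]
  have : |(k.factorial:ℝ)| = (k.factorial:ℝ) := abs_of_pos (by exact_mod_cast Nat.factorial_pos k)
  rw [this]
  exact mul_le_mul_of_nonneg_right (term_bound t M hM k) (by positivity)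

lemma summable_shift_bound (M : ℕ) {r : ℝ} (hr0 : 0 ≤ r) (hr : r < 1) :
    Summable (fun k : ℕ => ((k:ℝ)+1)^(M+1) * r^(k-1)) := by
  rw [← summable_nat_add_iff 1]
  have hbig : Summable (fun k : ℕ => (2:ℝ)^(M+1) * (((k:ℝ)+1)^(M+1) * r^k)) :=
    (summable_poly_geom (M+1) (by rwa [abs_of_nonneg hr0])).mul_left _
  apply Summable.of_nonneg_of_le _ _ hbig
  · intro k; positivity
  · intro k
    have h1 : ((k:ℕ)+1+1 : ℝ) ≤ 2*((k:ℝ)+1) := by push_cast; linarith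
    have h2 : (((k:ℕ)+1:ℕ):ℝ)+1 = (k:ℝ)+1+1 := by push_cast; ring
    rw [h2, show (k+1)-1 = k from rfl]
    calc ((k:ℝ)+1+1)^(M+1) * r^k ≤ (2*((k:ℝ)+1))^(M+1) * r^k := by
          apply mul_le_mul_of_nonneg_right _ (by positivity)
          exact pow_le_pow_left₀ (by positivity) h1 _
      _ = (2:ℝ)^(M+1) * (((k:ℝ)+1)^(M+1) * r^k) := by rw [mul_pow]; ring

lemma dterm_bound (t : ℝ) (M : ℕ) (hM : |t| ≤ (M:ℝ)) (k : ℕ) {z : ℝ} {r : ℝ}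
    (hzr : |z| ≤ r) (hr0 : 0 ≤ r) :
    |rpoch t k / k.factorial * ((k:ℝ) * z^(k-1))| ≤ ((k:ℝ)+1)^(M+1) * r^(k-1) := by
  rw [abs_mul, abs_div, abs_mul, abs_pow]
  have hfac : |(k.factorial:ℝ)| = (k.factorial:ℝ) := abs_of_pos (by exact_mod_cast Nat.factorial_pos k)
  rw [hfac, Nat.abs_cast]
  calc |rpoch t k| / k.factorial * ((k:ℝ) * |z|^(k-1))
      ≤ ((k:ℝ)+1)^M * (((k:ℝ)+1) * r^(k-1)) := by
        apply mul_le_mul (term_bound t M hM k)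
        · apply mul_le_mul (by linarith) (pow_le_pow_left₀ (abs_nonneg z) hzr _) (by positivity)
            (by positivity)
        · positivity
        · positivity
    _ = ((k:ℝ)+1)^(M+1) * r^(k-1) := by rw [pow_succ]; ring

lemma summable_dterm (t z : ℝ) (hz : |z| < 1) :
    Summable (fun k => rpoch t k / k.factorial * ((k:ℝ) * z^(k-1))) := by
  obtain ⟨M, hM1, hM⟩ := exists_M |t|
  refine Summable.of_norm_bounded
    (summable_shift_bound M (abs_nonneg z) hz) (fun k => ?_)
  rw [Real.norm_eq_abs]
  exact dterm_bound t M hM k le_rfl (abs_nonneg z)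

/-- the binomial function as a sum -/
noncomputable def binF (t z : ℝ) : ℝ := ∑' k, rpoch t k / k.factorial * z^k

lemma kpow_shift (z : ℝ) (k : ℕ) : (k:ℝ) * z^k = z * ((k:ℝ) * z^(k-1)) := by
  cases k with
  | zero => simp
  | succ m => rw [show m+1-1 = m from rfl, pow_succ]; push_cast; ring

lemma binF_hasDerivAt (t : ℝ) {z : ℝ} (hz : |z| < 1) :
    HasDerivAt (fun y => binF t y) (∑' k, rpoch t k / k.factorial * ((k:ℝ) * z^(k-1))) z := by
  obtain ⟨M, hM1, hM⟩ := exists_M |t|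
  set r : ℝ := (1+|z|)/2 with hr
  have hr0 : 0 ≤ r := by positivity
  have hr1 : r < 1 := by rw [hr]; linarith
  have hzr : |z| < r := by rw [hr]; linarith
  apply hasDerivAt_tsum_of_isPreconnected
    (u := fun k : ℕ => ((k:ℝ)+1)^(M+1) * r^(k-1))
    (g := fun (k : ℕ) (y : ℝ) => rpoch t k / k.factorial * y^k)
    (g' := fun (k : ℕ) (y : ℝ) => rpoch t k / k.factorial * ((k:ℝ) * y^(k-1)))
    (y₀ := (0:ℝ))
    (summable_shift_bound M hr0 hr1) (isOpen_Ioo (a := -r) (b := r))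
    (convex_Ioo _ _).isPreconnected
  · intro k y hy
    exact (hasDerivAt_pow k y).const_mul _
  · intro k y hy
    rw [Real.norm_eq_abs]
    exact dterm_bound t M hM k (le_of_lt (abs_lt.mpr ⟨hy.1, hy.2⟩)) hr0
  · exact mem_Ioo.mpr ⟨by linarith [abs_nonneg z], by linarith [abs_nonneg z]⟩
  · exact summable_term t 0 (by norm_num)
  · exact mem_Ioo.mpr (abs_lt.mp hzr)

lemma binF_ode (t z : ℝ) (hz : |z| < 1) :
    (1-z) * (∑' k, rpoch t k / k.factorial * ((k:ℝ) * z^(k-1))) = t * binF t z := by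
  set D : ℝ := ∑' k, rpoch t k / k.factorial * ((k:ℝ) * z^(k-1)) with hD
  have h1 : HasSum (fun k => rpoch t k / k.factorial * ((k:ℝ) * z^(k-1))) D :=
    (summable_dterm t z hz).hasSum
  have h2 : HasSum (fun k => rpoch t (k+1) / (k+1).factorial * (((k:ℝ)+1) * z^k)) D := by
    have := (hasSum_nat_add_iff' (f := fun k => rpoch t k / k.factorial * ((k:ℝ) * z^(k-1))) 1).mpr h1
    simp only [Finset.range_one, Finset.sum_singleton, Nat.cast_zero, zero_mul, mul_zero,
      sub_zero] at this
    refine this.congr_fun fun k => ?_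
    push_cast
    norm_num
  have hf : HasSum (fun k => rpoch t k / k.factorial * z^k) (binF t z) :=
    (summable_term t z hz).hasSum
  have h4 : HasSum (fun k => t * (rpoch t k / k.factorial * z^k)
      + z * (rpoch t k / k.factorial * ((k:ℝ) * z^(k-1)))) (t * binF t z + z * D) :=
    (hf.mul_left t).add (h1.mul_left z)
  have h5 : (fun k => rpoch t (k+1) / (k+1).factorial * (((k:ℝ)+1) * z^k))
      = (fun k => t * (rpoch t k / k.factorial * z^k)
          + z * (rpoch t k / k.factorial * ((k:ℝ) * z^(k-1)))) := by
    funext k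
    have hkf : (k.factorial : ℝ) ≠ 0 := by exact_mod_cast (Nat.factorial_pos k).ne'
    have e1 : rpoch t (k+1) / (k+1).factorial * (((k:ℝ)+1) * z^k)
        = (t+(k:ℝ)) * (rpoch t k / k.factorial * z^k) := by
      rw [rpoch_succ, Nat.factorial_succ]
      have hk1 : ((k:ℝ)+1) ≠ 0 := by positivity
      push_cast
      field_simp
    rw [e1]
    linear_combination (rpoch t k / (k.factorial:ℝ)) * kpow_shift z k
  rw [h5] at h2
  have := h2.unique h4
  linarith [this]

lemma binF_zero (t : ℝ) : binF t 0 = 1 := by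
  rw [binF, tsum_eq_single 0]
  · simp [rpoch_zero]
  · intro k hk
    rcases Nat.exists_eq_succ_of_ne_zero hk with ⟨m, rfl⟩
    simp [pow_succ]

lemma binF_deriv_zero (t : ℝ) {y : ℝ} (hy : |y| < 1) :
    HasDerivAt (fun z => binF t z * (1-z)^t) 0 y := by
  have h1y : (0:ℝ) < 1 - y := by
    have := abs_lt.mp hy
    linarith [this.2]
  have hfd := binF_hasDerivAt t hy
  have hlin : HasDerivAt (fun z : ℝ => 1 - z) (-1) y := by
    simpa using (hasDerivAt_id y).const_sub 1
  have hrp : HasDerivAt (fun z : ℝ => (1-z)^t) (-1 * t * (1-y)^(t-1)) y :=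
    hlin.rpow_const (Or.inl h1y.ne')
  have hmul := hfd.mul hrp
  have hode := binF_ode t y hy
  have hsplit : (1-y)^t = (1-y)^(t-1) * (1-y) := by
    rw [← Real.rpow_add_one h1y.ne' (t-1)]
    norm_num
  refine hmul.congr_deriv ?_
  rw [hsplit]
  linear_combination ((1-y)^(t-1)) * hode

lemma binF_eq (t y : ℝ) (hy : |y| < 1) : binF t y = (1-y)^(-t) := by
  have h1y : (0:ℝ) < 1 - y := by
    have := abs_lt.mp hy
    linarith [this.2]
  have key : binF t y * (1-y)^t = 1 := by
    have hcont : ∀ x ∈ Set.Icc (min 0 y) (max 0 y), |x| < 1 := by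
      intro x hx
      rcases abs_lt.mp hy with ⟨hy1, hy2⟩
      rcases hx with ⟨ha, hb⟩
      rw [abs_lt]
      constructor
      · calc (-1:ℝ) < min 0 y := by rw [lt_min_iff]; constructor <;> linarith
          _ ≤ x := ha
      · calc x ≤ max 0 y := hb
          _ < 1 := by rw [max_lt_iff]; constructor <;> linarith
    have hconst := constant_of_has_deriv_right_zero
      (f := fun z => binF t z * (1-z)^t) (a := min 0 y) (b := max 0 y)
      (fun x hx => ((binF_deriv_zero t (hcont x hx)).continuousAt).continuousWithinAt)
      (fun x hx => ((binF_deriv_zero t (hcont x ⟨hx.1, le_of_lt hx.2⟩)).hasDerivWithinAt))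
    rcases le_or_gt 0 y with h0 | h0
    · have hmin : min 0 y = 0 := min_eq_left h0
      have hmax : max 0 y = y := max_eq_right h0
      have := hconst y (by rw [hmin, hmax]; exact ⟨h0, le_rfl⟩)
      rw [hmin] at this
      rw [this, binF_zero]
      norm_num
    · have hmin : min 0 y = y := min_eq_right (le_of_lt h0)
      have hmax : max 0 y = 0 := max_eq_left (le_of_lt h0)
      have := hconst 0 (by rw [hmin, hmax]; exact ⟨le_of_lt h0, le_rfl⟩)
      rw [hmin] at this
      rw [← this, binF_zero]
      norm_num
  have hpos : (0:ℝ) < (1-y)^t := Real.rpow_pos_of_pos h1y t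
  rw [Real.rpow_neg (le_of_lt h1y)]
  field_simp at key ⊢
  linarith [key]

/-- R1: the binomial series -/
theorem hasSum_binomial (t y : ℝ) (hy : |y| < 1) :
    HasSum (fun k => rpoch t k / k.factorial * y^k) ((1-y)^(-t)) := by
  have := (summable_term t y hy).hasSum
  rwa [show (∑' k, rpoch t k / k.factorial * y^k) = binF t y from rfl, binF_eq t y hy] at this

/-- R2: term-by-term x-derivative of the binomial series -/
theorem hasSum_binomial_deriv (t y : ℝ) (hy : |y| < 1) :
    HasSum (fun k => rpoch t k / k.factorial * ((k:ℝ) * y^(k-1))) (t * (1-y)^(-t-1)) := by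
  have h1y : (0:ℝ) < 1 - y := by
    have := abs_lt.mp hy
    linarith [this.2]
  have h1 := (summable_dterm t y hy).hasSum
  have hode := binF_ode t y hy
  rw [binF_eq t y hy] at hode
  have hval : (∑' k, rpoch t k / k.factorial * ((k:ℝ) * y^(k-1))) = t * (1-y)^(-t-1) := by
    have hsplit : (1-y)^(-t) = (1-y)^(-t-1) * (1-y) := by
      rw [← Real.rpow_add_one h1y.ne' (-t-1)]
      norm_num
    have h2 : (1-y) * (∑' k, rpoch t k / k.factorial * ((k:ℝ) * y^(k-1)))
        = (1-y) * (t * (1-y)^(-t-1)) := by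
      rw [hode, hsplit]; ring
    exact mul_left_cancel₀ h1y.ne' h2
  rwa [hval] at h1

/-- R3: term-by-term parameter-derivative of the binomial series -/
theorem hasSum_binomial_param (t y : ℝ) (hy : |y| < 1) :
    HasSum (fun k => rpochD t k / k.factorial * y^k)
      (-Real.log (1-y) * (1-y)^(-t)) := by
  have h1y : (0:ℝ) < 1 - y := by
    have := abs_lt.mp hy
    linarith [this.2]
  obtain ⟨M, hM1, hM⟩ := exists_M (|t|+1)
  -- summability of the derivative terms, uniformly on Ioo (t-1) (t+1)
  have hbound : ∀ (s : ℝ), |s| ≤ (M:ℝ) → ∀ k : ℕ,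
      |rpochD s k / k.factorial * y^k| ≤ ((k:ℝ)+1)^(M+1) * |y|^k := by
    intro s hs k
    rw [abs_mul, abs_div, abs_pow]
    have hfac : |(k.factorial:ℝ)| = (k.factorial:ℝ) :=
      abs_of_pos (by exact_mod_cast Nat.factorial_pos k)
    rw [hfac]
    have h3 : (0:ℝ) < k.factorial := by exact_mod_cast Nat.factorial_pos k
    have h4 : |rpochD s k| ≤ (k:ℝ) * rpoch (M:ℝ) k := rpochD_abs_le s M hs hM1 k
    have h5 : |rpochD s k| / k.factorial ≤ (k:ℝ) * (((k:ℝ)+1)^M) := by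
      rw [div_le_iff₀ h3]
      calc |rpochD s k| ≤ (k:ℝ) * rpoch (M:ℝ) k := h4
        _ ≤ (k:ℝ) * ((k.factorial:ℝ) * ((k:ℝ)+1)^M) :=
            mul_le_mul_of_nonneg_left (rpoch_nat_le M k) (by positivity)
        _ = (k:ℝ) * ((k:ℝ)+1)^M * k.factorial := by ring
    calc |rpochD s k| / k.factorial * |y|^k ≤ ((k:ℝ) * ((k:ℝ)+1)^M) * |y|^k :=
          mul_le_mul_of_nonneg_right h5 (by positivity)
      _ ≤ (((k:ℝ)+1) * ((k:ℝ)+1)^M) * |y|^k := by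
          apply mul_le_mul_of_nonneg_right _ (by positivity)
          apply mul_le_mul_of_nonneg_right _ (by positivity)
          linarith
      _ = ((k:ℝ)+1)^(M+1) * |y|^k := by rw [pow_succ]; ring
  have husum : Summable (fun k : ℕ => ((k:ℝ)+1)^(M+1) * |y|^k) :=
    summable_poly_geom (M+1) (by rwa [abs_abs])
  have habs : ∀ s ∈ Set.Ioo (t-1) (t+1), |s| ≤ (M:ℝ) := by
    intro s hs
    rcases hs with ⟨ha, hb⟩
    rw [abs_le]
    have hn := neg_abs_le t
    have hp := le_abs_self t
    constructor
    · linarith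
    · linarith
  -- term-by-term differentiation in the parameter
  have hderiv : HasDerivAt (fun s => ∑' k, rpoch s k / k.factorial * y^k)
      (∑' k, rpochD t k / k.factorial * y^k) t := by
    apply hasDerivAt_tsum_of_isPreconnected
      (g := fun (k : ℕ) (s : ℝ) => rpoch s k / k.factorial * y^k)
      (g' := fun (k : ℕ) (s : ℝ) => rpochD s k / k.factorial * y^k)
      (y₀ := t)
      husum (isOpen_Ioo (a := t-1) (b := t+1))
      (convex_Ioo _ _).isPreconnected
    · intro k s hs
      have hfe : (fun s : ℝ => rpoch s k / k.factorial * y^k)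
          = (fun s : ℝ => rpoch s k * ((k.factorial:ℝ)⁻¹ * y^k)) := by
        funext u; ring
      have h0 := (hasDerivAt_rpoch k s).mul_const ((k.factorial:ℝ)⁻¹ * y^k)
      rw [hfe]
      exact h0.congr_deriv (by ring)
    · intro k s hs
      rw [Real.norm_eq_abs]
      exact hbound s (habs s hs) k
    · exact Set.mem_Ioo.mpr ⟨by linarith, by linarith⟩
    · exact summable_term t y hy
    · exact Set.mem_Ioo.mpr ⟨by linarith, by linarith⟩
  -- the closed form of the sum function
  have hfun : (fun s => ∑' k, rpoch s k / k.factorial * y^k) = (fun s => (1-y)^(-s)) := by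
    funext s
    exact binF_eq s y hy
  rw [hfun] at hderiv
  have hexp : HasDerivAt (fun s : ℝ => (1-y)^(-s)) (-Real.log (1-y) * (1-y)^(-t)) t := by
    have hrw : (fun s : ℝ => (1-y)^(-s)) = (fun s : ℝ => Real.exp (Real.log (1-y) * -s)) := by
      funext s
      rw [Real.rpow_def_of_pos h1y]
    rw [hrw]
    have hin : HasDerivAt (fun s : ℝ => Real.log (1-y) * -s) (-Real.log (1-y)) t := by
      have := ((hasDerivAt_id t).neg).const_mul (Real.log (1-y))
      exact this.congr_deriv (by ring)
    have := hin.exp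
    convert this using 1
    rw [Real.rpow_def_of_pos h1y]
    ring
  have huniq := hderiv.unique hexp
  have := (Summable.of_norm_bounded husum (fun k => by
    rw [Real.norm_eq_abs]; exact hbound t (by linarith [le_abs_self t, abs_nonneg t]) k)).hasSum
  rwa [huniq] at this

end BinomialSeries

section DualSummability
open Filter
local notation "K" => DualNumber ℝ

/-- fst as a continuous linear map -/
noncomputable def fstL : K →L[ℝ] ℝ :=
  LinearMap.mkContinuous ⟨⟨fun u => u.fst, fun a b => fst_add a b⟩, fun c a => fst_smul c a⟩ 1
    (fun u => by
      rw [TrivSqZeroExt.norm_def, one_mul]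
      simp only [LinearMap.coe_mk, AddHom.coe_mk]
      rw [Real.norm_eq_abs (fst u)]
      have := norm_nonneg u.snd
      linarith [le_refl ‖fst u‖])

/-- snd as a continuous linear map -/
noncomputable def sndL : K →L[ℝ] ℝ :=
  LinearMap.mkContinuous ⟨⟨fun u => u.snd, fun a b => snd_add a b⟩, fun c a => snd_smul c a⟩ 1
    (fun u => by
      rw [TrivSqZeroExt.norm_def, one_mul]
      simp only [LinearMap.coe_mk, AddHom.coe_mk]
      rw [Real.norm_eq_abs (snd u)]
      have := norm_nonneg u.fst
      linarith [le_refl ‖snd u‖])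

/-- inl as a continuous linear map -/
noncomputable def inlL : ℝ →L[ℝ] K :=
  LinearMap.mkContinuous
    ⟨⟨fun r => inl r, fun a b => by ext <;> simp⟩, fun c a => by ext <;> simp⟩ 1
    (fun r => by
      simp only [LinearMap.coe_mk, AddHom.coe_mk]
      rw [norm_inl, one_mul])

/-- inr as a continuous linear map -/
noncomputable def inrL : ℝ →L[ℝ] K :=
  LinearMap.mkContinuous
    ⟨⟨fun r => inr r, fun a b => by ext <;> simp⟩, fun c a => by ext <;> simp⟩ 1
    (fun r => by
      simp only [LinearMap.coe_mk, AddHom.coe_mk]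
      rw [norm_inr, one_mul])

lemma fstL_apply (u : K) : fstL u = u.fst := rfl
lemma sndL_apply (u : K) : sndL u = u.snd := rfl
lemma inlL_apply (r : ℝ) : inlL r = inl r := rfl
lemma inrL_apply (r : ℝ) : inrL r = inr r := rfl

/-- combine componentwise sums -/
lemma hasSum_dual {u : ℕ → K} {p q : ℝ}
    (hp : HasSum (fun n => (u n).fst) p) (hq : HasSum (fun n => (u n).snd) q) :
    HasSum u (inl p + inr q) := by
  have h1 : HasSum (fun n => inl ((u n).fst) + inr ((u n).snd) : ℕ → K) (inl p + inr q) :=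
    (hp.mapL inlL).add (hq.mapL inrL)
  refine h1.congr_fun fun n => ?_
  exact (inl_fst_add_inr_snd_eq (u n)).symm

/-- componentwise limits give limits in the dual numbers -/
lemma tendsto_dual {σ : ℕ → K} {Lf Ls : ℝ}
    (hf : Filter.Tendsto (fun n => (σ n).fst) atTop (nhds Lf))
    (hs : Filter.Tendsto (fun n => (σ n).snd) atTop (nhds Ls)) :
    Filter.Tendsto σ atTop (nhds (inl Lf + inr Ls)) := by
  have h1 : Filter.Tendsto (fun n => inl ((σ n).fst) + inr ((σ n).snd) : ℕ → K)
      atTop (nhds (inl Lf + inr Ls)) := by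
    exact ((inlL.continuous.tendsto Lf).comp hf).add ((inrL.continuous.tendsto Ls).comp hs)
  refine h1.congr fun n => ?_
  exact inl_fst_add_inr_snd_eq (σ n)

/-- scaled ℓ¹ norm on dual numbers -/
def nl (l : ℝ) (u : K) : ℝ := |u.fst| + l * |u.snd|

lemma nl_nonneg {l : ℝ} (hl : 0 < l) (u : K) : 0 ≤ nl l u := by
  have h1 := abs_nonneg u.fst
  have h2 : 0 ≤ l * |u.snd| := by positivity
  unfold nl; linarith

lemma nl_mul_le {l : ℝ} (hl : 0 < l) (u v : K) : nl l (u*v) ≤ nl l u * nl l v := by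
  unfold nl
  rw [fst_mul, dsnd_mul]
  have h1 : |u.fst * v.fst| = |u.fst| * |v.fst| := abs_mul _ _
  have h2 : |u.fst * v.snd + v.fst * u.snd| ≤ |u.fst| * |v.snd| + |v.fst| * |u.snd| := by
    refine (abs_add_le _ _).trans ?_
    rw [abs_mul, abs_mul]
  nlinarith [mul_le_mul_of_nonneg_left h2 (le_of_lt hl),
    mul_nonneg (mul_nonneg (le_of_lt hl) (le_of_lt hl))
      (mul_nonneg (abs_nonneg u.snd) (abs_nonneg v.snd)),
    abs_nonneg u.fst, abs_nonneg v.fst, abs_nonneg u.snd, abs_nonneg v.snd]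

lemma norm_le_nl {l : ℝ} (hl : 0 < l) (hl1 : l ≤ 1) (u : K) : ‖u‖ ≤ l⁻¹ * nl l u := by
  rw [TrivSqZeroExt.norm_def, Real.norm_eq_abs, Real.norm_eq_abs]
  unfold nl
  have key : l⁻¹ * (|u.fst| + l * |u.snd|) = l⁻¹ * |u.fst| + |u.snd| := by
    field_simp
  rw [key]
  have h1 : |u.fst| ≤ l⁻¹ * |u.fst| := by
    have hinv : (1:ℝ) ≤ l⁻¹ := by
      rw [← inv_one]
      exact inv_anti₀ hl hl1
    nlinarith [abs_nonneg u.fst]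
  linarith

lemma nl_continuous (l : ℝ) : Continuous (nl l) := by
  have hfst : Continuous fun u : K => |u.fst| := fstL.continuous.abs
  have hsnd : Continuous fun u : K => l * |u.snd| := continuous_const.mul (sndL.continuous.abs)
  exact hfst.add hsnd

/-- the ratio test in the scaled norm -/
lemma ratio_summable {l : ℝ} (hl : 0 < l) (hl1 : l ≤ 1) (u τ : ℕ → K)
    (hrec : ∀ k, u (k+1) = u k * τ k) {L : ℝ}
    (hτ : Filter.Tendsto (fun k => nl l (τ k)) atTop (nhds L)) (hL : L < 1) :
    Summable (fun k => ‖u k‖) := by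
  set r : ℝ := (L+1)/2 with hrdef
  have hr1 : r < 1 := by rw [hrdef]; linarith
  have hLr : L < r := by rw [hrdef]; linarith
  have hev : ∀ᶠ k in atTop, nl l (τ k) < r := hτ.eventually_lt_const hLr
  have hrat : ∀ᶠ k in atTop, ‖nl l (u (k+1))‖ ≤ r * ‖nl l (u k)‖ := by
    filter_upwards [hev] with k hk
    rw [Real.norm_eq_abs, Real.norm_eq_abs, abs_of_nonneg (nl_nonneg hl _),
      abs_of_nonneg (nl_nonneg hl _)]
    calc nl l (u (k+1)) = nl l (u k * τ k) := by rw [hrec k]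
      _ ≤ nl l (u k) * nl l (τ k) := nl_mul_le hl _ _
      _ ≤ nl l (u k) * r := mul_le_mul_of_nonneg_left (le_of_lt hk) (nl_nonneg hl _)
      _ = r * nl l (u k) := by ring
  have hsum : Summable (fun k => nl l (u k)) :=
    summable_of_ratio_norm_eventually_le hr1 hrat
  apply Summable.of_nonneg_of_le (fun k => norm_nonneg (u k))
    (fun k => norm_le_nl hl hl1 (u k))
  exact hsum.mul_left l⁻¹

end DualSummability

section StepA
local notation "K" => DualNumber ℝ

lemma dualPoch_fst' (a : K) (k : ℕ) : (dualPoch a k).fst = rpoch a.fst k := by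
  rw [dualPoch_fst]; rfl

lemma dualPoch_snd (a : K) (k : ℕ) : (dualPoch a k).snd = a.snd * rpochD a.fst k := by
  induction k with
  | zero => simp [dualPoch, rpochD]
  | succ m ih =>
    rw [dualPoch, dsnd_mul, ih, dualPoch_fst', rpochD, fst_add, snd_add, dnatCast_fst,
      dnatCast_snd]
    ring

lemma dualPow_fst (w c : K) : (dualPow w c).fst = w.fst ^ c.fst := by
  rw [dualPow, fst_mul, fst_inl, fst_add, fst_one, fst_smul]
  rw [show (ε : K).fst = 0 from rfl]
  simp

lemma dualPow_snd (w c : K) :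
    (dualPow w c).snd = w.fst ^ c.fst * (c.snd * Real.log w.fst + c.fst * w.snd / w.fst) := by
  rw [dualPow, dsnd_mul, fst_add, fst_one, fst_smul, snd_inl, snd_add, snd_one, snd_smul,
    fst_inl]
  rw [show (ε : K).fst = 0 from rfl, show (ε : K).snd = 1 from rfl, smul_eq_mul, smul_eq_mul]
  ring

/-- Step A: the dual binomial series sums to the dual power. -/
lemma hasSum_dualPow (s x : K) (hx : |x.fst| < 1) :
    HasSum (fun j => binCoeff (-s) j * x^j) (dualPow (1-x) s) := by
  have h1x : (0:ℝ) < 1 - x.fst := by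
    have := abs_lt.mp hx
    linarith [this.2]
  set t : ℝ := -s.fst with htdef
  have hfst1x : (1-x).fst = 1 - x.fst := by rw [fst_sub, fst_one]
  have hsnd1x : (1-x).snd = -x.snd := by rw [snd_sub, snd_one]; ring
  -- components of the terms
  have hfst : ∀ j, (binCoeff (-s) j * x^j).fst = rpoch t j / j.factorial * x.fst^j := by
    intro j
    rw [fst_mul, dfst_pow, binCoeff, fst_mul, fst_inl, dualPoch_fst', fst_neg]
    ring
  have hsnd : ∀ j, (binCoeff (-s) j * x^j).snd =
      rpoch t j / j.factorial * ((j:ℝ) * x.fst^(j-1)) * x.snd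
        + (-s.snd) * (rpochD t j / j.factorial * x.fst^j) := by
    intro j
    rw [dsnd_mul, dsnd_pow, dfst_pow, binCoeff, fst_mul, fst_inl, dualPoch_fst', dsnd_mul,
      fst_inl, snd_inl, dualPoch_snd, dualPoch_fst', fst_neg, snd_neg]
    ring
  -- fst sum
  have h1 : HasSum (fun j => (binCoeff (-s) j * x^j).fst) ((dualPow (1-x) s).fst) := by
    have hb := hasSum_binomial t x.fst hx
    rw [show -t = s.fst by rw [htdef]; ring] at hb
    rw [dualPow_fst, hfst1x]
    exact hb.congr_fun fun j => hfst j
  -- snd sum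
  have h2 : HasSum (fun j => (binCoeff (-s) j * x^j).snd) ((dualPow (1-x) s).snd) := by
    have hA := (hasSum_binomial_deriv t x.fst hx).mul_right x.snd
    have hB := (hasSum_binomial_param t x.fst hx).mul_left (-s.snd)
    have hAB := hA.add hB
    have hval : t * (1-x.fst)^(-t-1) * x.snd
        + (-s.snd) * (-Real.log (1-x.fst) * (1-x.fst)^(-t)) = (dualPow (1-x) s).snd := by
      rw [dualPow_snd, hfst1x, hsnd1x, htdef]
      rw [show -(-s.fst) = s.fst by ring]
      have hsplit : (1-x.fst)^(s.fst) = (1-x.fst)^(s.fst-1) * (1-x.fst) := by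
        rw [← Real.rpow_add_one h1x.ne' (s.fst-1)]
        norm_num
      rw [hsplit]
      field_simp
      ring
    rw [← hval]
    exact hAB.congr_fun fun j => hsnd j
  have := hasSum_dual h1 h2
  rwa [inl_fst_add_inr_snd_eq] at this

end StepA

section RatioApplications
open Filter
local notation "K" => DualNumber ℝ

lemma tendsto_inv_nat : Tendsto (fun j : ℕ => ((j:ℝ)+1)⁻¹) atTop (nhds 0) := by
  have := tendsto_one_div_add_atTop_nhds_zero_nat (𝕜 := ℝ)
  refine this.congr fun j => ?_
  rw [one_div]

lemma tendsto_aff (c : ℝ) :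
    Tendsto (fun j : ℕ => ((j:ℝ)+1)⁻¹ * (c+(j:ℝ))) atTop (nhds 1) := by
  have h1 : Tendsto (fun j : ℕ => 1 + (c-1) * ((j:ℝ)+1)⁻¹) atTop (nhds (1 + (c-1) * 0)) :=
    tendsto_const_nhds.add (tendsto_const_nhds.mul tendsto_inv_nat)
  rw [show (1:ℝ) + (c-1) * 0 = 1 by ring] at h1
  refine h1.congr fun j => ?_
  have hj : ((j:ℝ)+1) ≠ 0 := by positivity
  field_simp
  ring

lemma tendsto_inv_shift (d : ℝ) :
    Tendsto (fun k : ℕ => (d+(k:ℝ))⁻¹) atTop (nhds 0) := by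
  apply Filter.Tendsto.inv_tendsto_atTop
  exact tendsto_atTop_add_const_left _ d tendsto_natCast_atTop_atTop

lemma tendsto_ratio2 (c d : ℝ) :
    Tendsto (fun k : ℕ => (c+(k:ℝ)) * ((d:ℝ)+(k:ℝ))⁻¹) atTop (nhds 1) := by
  have h1 := (tendsto_aff c).mul ((tendsto_aff d).inv₀ one_ne_zero)
  rw [show (1:ℝ) * 1⁻¹ = 1 by norm_num] at h1
  refine h1.congr fun k => ?_
  have hk : ((k:ℝ)+1) ≠ 0 := by positivity
  rw [mul_inv, inv_inv]
  field_simp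

/-- summability from a multiplicative recurrence whose factor tends to `x` -/
lemma summable_norm_of_rec (u τ : ℕ → K) (x : K) (hx : |x.fst| < 1)
    (hrec : ∀ k, u (k+1) = u k * τ k)
    (hτ : Tendsto τ atTop (nhds x)) : Summable fun k => ‖u k‖ := by
  set l : ℝ := min 1 ((1 - |x.fst|)/(2*(|x.snd|+1))) with hldef
  have hxf : 0 < 1 - |x.fst| := by linarith
  have hl : 0 < l := by
    apply lt_min one_pos
    positivity
  have hl1 : l ≤ 1 := min_le_left _ _
  have hlx : |x.fst| + l * |x.snd| < 1 := by
    have h2 : l ≤ (1 - |x.fst|)/(2*(|x.snd|+1)) := min_le_right _ _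
    have h3 : l * |x.snd| ≤ ((1 - |x.fst|)/(2*(|x.snd|+1))) * |x.snd| :=
      mul_le_mul_of_nonneg_right h2 (abs_nonneg _)
    have h4 : ((1 - |x.fst|)/(2*(|x.snd|+1))) * |x.snd| < (1 - |x.fst|)/2 := by
      rw [div_mul_eq_mul_div, div_lt_div_iff₀ (by positivity) (by norm_num)]
      nlinarith [abs_nonneg x.snd]
    linarith
  apply ratio_summable hl hl1 u τ hrec (L := nl l x)
  · exact ((nl_continuous l).tendsto x).comp hτ
  · exact hlx

lemma summable_norm_binSeries (g x : K) (hx : |x.fst| < 1) :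
    Summable (fun j => ‖binCoeff g j * x^j‖) := by
  set σ : ℕ → K := fun j => inl (((j:ℝ)+1)⁻¹) * (g + (j:K)) with hσ
  apply summable_norm_of_rec _ (fun j => σ j * x) x hx
  · intro j
    rw [pow_succ, binCoeff_rec, hσ]
    ring
  · have hone : Tendsto σ atTop (nhds 1) := by
      have h1 : Tendsto (fun j => (σ j).fst) atTop (nhds 1) := by
        have : ∀ j : ℕ, (σ j).fst = ((j:ℝ)+1)⁻¹ * (g.fst + (j:ℝ)) := by
          intro j
          rw [hσ, fst_mul, fst_inl, fst_add, dnatCast_fst]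
        exact (tendsto_aff g.fst).congr fun j => (this j).symm
      have h2 : Tendsto (fun j => (σ j).snd) atTop (nhds 0) := by
        have : ∀ j : ℕ, (σ j).snd = ((j:ℝ)+1)⁻¹ * g.snd := by
          intro j
          rw [hσ, dsnd_mul, fst_inl, snd_inl, snd_add, dnatCast_snd]
          ring
        have hlim : Tendsto (fun j : ℕ => ((j:ℝ)+1)⁻¹ * g.snd) atTop (nhds (0 * g.snd)) :=
          tendsto_inv_nat.mul_const _
        rw [zero_mul] at hlim
        exact hlim.congr fun j => (this j).symm
      have := tendsto_dual h1 h2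
      simpa using this
    have := hone.mul_const x
    rwa [one_mul] at this

lemma summable_norm_hypSeries (p q b x : K) (hb : ∀ n : ℕ, b.fst ≠ -n) (hx : |x.fst| < 1) :
    Summable (fun k => ‖hypCoeff p q b k * x^k‖) := by
  set σ : ℕ → K := fun k =>
    inl (((k:ℝ)+1)⁻¹) * ((p + (k:K)) * (q + (k:K)) * Ring.inverse (b + (k:K))) with hσ
  have hIk : ∀ k : ℕ, Ring.inverse (b + (k:K)) = dInv (b + (k:K)) := fun k =>
    ringInverse_eq_dInv _ (shift_fst_ne_zero b hb k)
  have hfstform : ∀ k : ℕ, (σ k).fst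
      = (((k:ℝ)+1)⁻¹ * (p.fst+(k:ℝ))) * ((q.fst+(k:ℝ)) * ((b.fst+(k:ℝ)))⁻¹) := by
    intro k
    rw [hσ]
    dsimp only
    rw [hIk k]
    simp only [fst_mul, dsnd_mul, fst_add, snd_add, fst_inl, snd_inl, dInv_fst, dInv_snd,
      dnatCast_fst, dnatCast_snd]
    ring
  have hsndform : ∀ k : ℕ, (σ k).snd
      = (((k:ℝ)+1)⁻¹ * (p.fst+(k:ℝ))) * ((q.fst+(k:ℝ)) * ((b.fst+(k:ℝ)))⁻¹)
          * ((b.fst+(k:ℝ))⁻¹) * (-b.snd)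
        + ((((k:ℝ)+1)⁻¹ * (p.fst+(k:ℝ))) * ((b.fst+(k:ℝ))⁻¹ * q.snd)
            + (((k:ℝ)+1)⁻¹ * (q.fst+(k:ℝ))) * ((b.fst+(k:ℝ))⁻¹ * p.snd)) := by
    intro k
    rw [hσ]
    dsimp only
    rw [hIk k]
    simp only [fst_mul, dsnd_mul, fst_add, snd_add, fst_inl, snd_inl, dInv_fst, dInv_snd,
      dnatCast_fst, dnatCast_snd]
    ring
  apply summable_norm_of_rec _ (fun k => σ k * x) x hx
  · intro k
    rw [pow_succ, hypCoeff_rec p q b hb, hσ]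
    ring
  · have hone : Tendsto σ atTop (nhds 1) := by
      have h1 : Tendsto (fun k => (σ k).fst) atTop (nhds 1) := by
        have hl1 := (tendsto_aff p.fst).mul (tendsto_ratio2 q.fst b.fst)
        rw [mul_one] at hl1
        exact hl1.congr fun k => (hfstform k).symm
      have h2 : Tendsto (fun k => (σ k).snd) atTop (nhds 0) := by
        have hT1 : Tendsto (fun k : ℕ => (((k:ℝ)+1)⁻¹ * (p.fst+(k:ℝ)))
            * ((q.fst+(k:ℝ)) * ((b.fst+(k:ℝ)))⁻¹) * ((b.fst+(k:ℝ))⁻¹) * (-b.snd))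
            atTop (nhds (1 * 1 * 0 * (-b.snd))) :=
          (((tendsto_aff p.fst).mul (tendsto_ratio2 q.fst b.fst)).mul
            (tendsto_inv_shift b.fst)).mul_const _
        have hT2 : Tendsto (fun k : ℕ => (((k:ℝ)+1)⁻¹ * (p.fst+(k:ℝ)))
            * ((b.fst+(k:ℝ))⁻¹ * q.snd) + (((k:ℝ)+1)⁻¹ * (q.fst+(k:ℝ)))
            * ((b.fst+(k:ℝ))⁻¹ * p.snd)) atTop (nhds (1 * (0 * q.snd) + 1 * (0 * p.snd))) :=
          ((tendsto_aff p.fst).mul ((tendsto_inv_shift b.fst).mul_const _)).add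
            ((tendsto_aff q.fst).mul ((tendsto_inv_shift b.fst).mul_const _))
        have hsum := hT1.add hT2
        rw [show (1:ℝ) * 1 * 0 * (-b.snd) + (1 * (0 * q.snd) + 1 * (0 * p.snd)) = 0 by ring]
          at hsum
        exact hsum.congr fun k => (hsndform k).symm
      have := tendsto_dual h1 h2
      simpa using this
    have := hone.mul_const x
    rwa [one_mul] at this

end RatioApplications

/-- The dual Euler transformation:
`₂F₁(â₁, â₂; b̂; x̂) = (1 - x̂)^{b̂ - â₁ - â₂} ₂F₁(b̂ - â₁, b̂ - â₂; b̂; x̂)`. -/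
theorem dual_euler_transformation (a₁ a₂ b x : DualNumber ℝ)
    (hb : ∀ n : ℕ, b.fst ≠ -n) (hx : |x.fst| < 1) :
    dualGaussHyper a₁ a₂ b x =
      dualPow (1 - x) (b - a₁ - a₂) * dualGaussHyper (b - a₁) (b - a₂) b x := by
  have hrewrite : ∀ p q : DualNumber ℝ,
      dualGaussHyper p q b x = ∑' k, hypCoeff p q b k * x^k := by
    intro p q
    unfold dualGaussHyper hypCoeff
    refine tsum_congr fun k => ?_
    rw [dsmul_eq_inl_mul]
    ring
  have hbin : HasSum (fun j => binCoeff (a₁+a₂-b) j * x^j) (dualPow (1-x) (b-a₁-a₂)) := by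
    have := hasSum_dualPow (b-a₁-a₂) x hx
    rwa [show -(b-a₁-a₂) = a₁+a₂-b by ring] at this
  have hP : dualPow (1-x) (b-a₁-a₂) = ∑' j, binCoeff (a₁+a₂-b) j * x^j := hbin.tsum_eq.symm
  rw [hrewrite a₁ a₂, hrewrite (b-a₁) (b-a₂), hP]
  rw [tsum_mul_tsum_eq_tsum_sum_antidiagonal_of_summable_norm
    (summable_norm_binSeries _ x hx) (summable_norm_hypSeries _ _ b x hb hx)]
  refine tsum_congr fun n => Eq.symm ?_
  calc ∑ kl ∈ Finset.HasAntidiagonal.antidiagonal n,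
        (binCoeff (a₁+a₂-b) kl.1 * x^kl.1) * (hypCoeff (b-a₁) (b-a₂) b kl.2 * x^kl.2)
      = ∑ kl ∈ Finset.HasAntidiagonal.antidiagonal n,
          (binCoeff (a₁+a₂-b) kl.1 * hypCoeff (b-a₁) (b-a₂) b kl.2) * x^n := by
        refine Finset.sum_congr rfl fun kl hkl => ?_
        have hklsum : kl.1 + kl.2 = n := Finset.HasAntidiagonal.mem_antidiagonal.mp hkl
        rw [← hklsum, pow_add]
        ring
    _ = (∑ kl ∈ Finset.HasAntidiagonal.antidiagonal n,
          binCoeff (a₁+a₂-b) kl.1 * hypCoeff (b-a₁) (b-a₂) b kl.2) * x^n := by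
        rw [Finset.sum_mul]
    _ = hypCoeff a₁ a₂ b n * x^n := by rw [cauchy_coeff_eq a₁ a₂ b hb n]
end
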